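/- arXiv:1902.03863 — 4 statements merged into one kernel-verified Lean document; each statement's English description precedes it below -/
import Mathlib

section
/- Let n ≥ 2 and 0 ≤ k < n be integers, let q* = 2n²/((n−k)(2n−1)), and let 1 < p ≤ q < ∞ with q > q*·p. Then there exists a constant c = c(p,q,k,n) > 0 such that for every δ ∈ (0,1) there exists a nonzero f ∈ L^p(ℝ^n) with ‖M^k_δ f‖_{L^q(ℝ^n)} ≥ c · δ^{n/q − (n−k)/p} · ‖f‖_{L^p(ℝ^n)}. -/
open MeasureTheory Metric Set

noncomputable section

/-- A `k`-face of the axis-parallel cube in `ℝⁿ` with center `x` and side length `2r`: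
the coordinates `j ∈ S` (with `#S = n - k`) are fixed at `x j ± r` (sign given by `ε j`),
the remaining coordinates range over `[x j - r, x j + r]`. -/
def kFace {n : ℕ} (x : Fin n → ℝ) (r : ℝ) (S : Finset (Fin n)) (ε : Fin n → Bool) :
    Set (Fin n → ℝ) :=
  {y | (∀ j ∈ S, y j = x j + (if ε j then r else -r)) ∧ ∀ j ∉ S, |y j - x j| ≤ r}

/-- The `k`-skeleton `S_k(x,r)` of the axis-parallel cube with center `x` and side
length `2r`: the union of all its `k`-faces. -/
def skeleton (n k : ℕ) (x : Fin n → ℝ) (r : ℝ) : Set (Fin n → ℝ) :=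
  ⋃ (S : Finset (Fin n)) (_ : S.card = n - k) (ε : Fin n → Bool), kFace x r S ε

/-- The `k`-skeleton maximal operator with width `δ`:
`M^k_δ f (x) = sup_{1 ≤ r ≤ 2} min_j ⨍_{S^j_{k,δ}(x,r)} |f|`, the minimum being taken
over all `k`-faces of the cube with center `x` and side length `2r`, each face thickened
by `δ` in the `ℓ∞` metric (which is the sup metric on `Fin n → ℝ`). -/
def skelMax (n k : ℕ) (δ : ℝ) (f : (Fin n → ℝ) → ℝ) (x : Fin n → ℝ) : ℝ :=
  ⨆ r ∈ Set.Icc (1 : ℝ) 2,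
    ⨅ (S : {S : Finset (Fin n) // S.card = n - k}) (ε : Fin n → Bool),
      ⨍ y in cthickening δ (kFace x r S.1 ε), |f y|

/-- The unit cube `Q₀ = [0,1)ⁿ`. -/
def Q0 (n : ℕ) : Set (Fin n → ℝ) := Set.univ.pi fun _ => Set.Ico (0 : ℝ) 1

/-- The cube `7Q₀`, concentric with `Q₀` and of side length `7`. -/
def sevenQ0 (n : ℕ) : Set (Fin n → ℝ) := Set.univ.pi fun _ => Set.Icc (-3 : ℝ) 4

/-- The translate by `v` of the coordinate `k`-plane spanned by the basis vectors
`e_j`, `j ∈ π`. -/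
def planeTranslate {n : ℕ} (π : Finset (Fin n)) (v : Fin n → ℝ) : Set (Fin n → ℝ) :=
  {y | ∀ j ∉ π, y j = v j}

/-- Center of the grid cube indexed by `z` in the grid of width `η` on `Q₀`. -/
def gridCenter {n : ℕ} (η : ℝ) {m : ℕ} (z : Fin n → Fin m) : Fin n → ℝ :=
  fun j => η * ((z j : ℝ) + 1 / 2)

/-- Index of the grid cube of width `η` containing `x` (for `x ∈ Q₀`). -/
def zOf {n : ℕ} (η : ℝ) {m : ℕ} (hm : 0 < m) (x : Fin n → ℝ) : Fin n → Fin m :=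
  fun j => ⟨(⌊x j / η⌋).toNat % m, Nat.mod_lt _ hm⟩

/-- The selected `k`-face `ℓᶻ` of the skeleton `S_k(x_z, ρ z)`, where `x_z` is the center
of the grid cube indexed by `z`. -/
def linFace {n : ℕ} (η : ℝ) {m : ℕ} (ρ : (Fin n → Fin m) → ℝ)
    (S : (Fin n → Fin m) → Finset (Fin n)) (ε : (Fin n → Fin m) → Fin n → Bool)
    (z : Fin n → Fin m) : Set (Fin n → ℝ) :=
  kFace (gridCenter η z) (ρ z) (S z) (ε z)

/-- The linearized `k`-skeleton maximal operator `M̃^k_{ρ,η}` of width `η`: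
for `x` in the grid cube indexed by `z`, it averages `|f|` over the closed
`η`-neighborhood (in the `ℓ∞` metric) of the selected face `ℓᶻ`. -/
def linMax {n : ℕ} (η : ℝ) {m : ℕ} (hm : 0 < m) (ρ : (Fin n → Fin m) → ℝ)
    (S : (Fin n → Fin m) → Finset (Fin n)) (ε : (Fin n → Fin m) → Fin n → Bool)
    (f : (Fin n → ℝ) → ℝ) (x : Fin n → ℝ) : ℝ :=
  ⨍ y in cthickening η (linFace η ρ S ε (zOf η hm x)), |f y|

/-- The overlap property for the selected faces: every affine translate `V` of a coordinate
`k`-plane `π` contains at most `C₀ · (#J)^{1 - (n-k)(2n-1)/(2n²)}` of the faces `ℓᶻ`, `z ∈ J`,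
whenever all the faces indexed by `J` are parallel to `π`. -/
def OverlapProp {n : ℕ} (k : ℕ) (η : ℝ) {m : ℕ} (ρ : (Fin n → Fin m) → ℝ)
    (S : (Fin n → Fin m) → Finset (Fin n)) (ε : (Fin n → Fin m) → Fin n → Bool)
    (C0 : ℝ) : Prop :=
  ∀ π : Finset (Fin n), π.card = k →
    ∀ J : Set (Fin n → Fin m),
      (∀ z ∈ J, ∃ v : Fin n → ℝ, linFace η ρ S ε z ⊆ planeTranslate π v) →
      ∀ v : Fin n → ℝ,
        ({z ∈ J | linFace η ρ S ε z ⊆ planeTranslate π v}).ncard ≤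
          C0 * (J.ncard : ℝ) ^ (1 - ((n : ℝ) - k) * (2 * (n : ℝ) - 1) / (2 * (n : ℝ) ^ 2))

/-- Abstract maximal averaging operator `T f (x) = sup_{r ∈ I} ⨍_{A_{x,r}} |f|`. -/
def absMax {n : ℕ} {I : Type*} (A : (Fin n → ℝ) → I → Set (Fin n → ℝ))
    (f : (Fin n → ℝ) → ℝ) (x : Fin n → ℝ) : ℝ :=
  ⨆ r : I, ⨍ y in A x r, |f y|

/-- `goodCount A E lam μ` says: for at least `m/2` of the indices `j`, the subset of
`A j ∩ E` where the multiplicity function `Υ = Σᵢ 1_{Aᵢ ∩ E}` is at most `μ` has measure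
at least `(lam/2)·|A j|`. -/
def goodCount {n m : ℕ} (A : Fin m → Set (Fin n → ℝ)) (E : Set (Fin n → ℝ))
    (lam : ℝ) (μ : ℕ) : Prop :=
  (m : ℝ) / 2 ≤
    ({j : Fin m | ENNReal.ofReal (lam / 2) * volume (A j) ≤
        volume {y ∈ A j ∩ E | ({i : Fin m | y ∈ A i ∩ E}).ncard ≤ μ}}).ncard

/-! The witness is the indicator `f` of the `2δ`-neighbourhood `U` of the skeleton `S_k(0, 3/2)`.
If `‖x‖∞ ≤ δ`, every `δ`-thickened face of `S_k(x, 3/2)` is contained in `U`, so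
`M^k_δ f ≥ 1` on the cube `[-δ, δ]ⁿ` and `‖M^k_δ f‖_q ≥ (2δ)^{n/q}`. On the other hand `U` is
covered by boundedly many boxes with `n - k` sides of length `4δ`, so `‖f‖_p ≲ δ^{(n-k)/p}`. -/
open scoped ENNReal

lemma cthickening_Icc_subset {ι : Type*} [Fintype ι] (a b : ι → ℝ) {δ : ℝ} (hδ : 0 ≤ δ) :
    cthickening δ (Icc a b) ⊆ Icc (a - fun _ => δ) (b + fun _ => δ) := by
  rw [← isCompact_Icc.add_closedBall_zero hδ, closedBall_pi _ hδ]
  simp only [Pi.zero_apply, Real.closedBall_eq_Icc, zero_add, pi_univ_Icc, sub_eq_add_neg]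
  exact Icc_add_Icc_subset _ _ _ _

lemma cthickening_iUnion_of_finite {α ι : Type*} [PseudoEMetricSpace α] [Finite ι]
    (s : ι → Set α) (δ : ℝ) :
    cthickening δ (⋃ i, s i) = ⋃ i, cthickening δ (s i) := by
  refine subset_antisymm (fun y hy => ?_)
    (iUnion_subset fun i => cthickening_subset_of_subset δ (subset_iUnion s i))
  rcases isEmpty_or_nonempty ι with hι | hι
  · simp at hy
  rw [mem_cthickening_iff, infEDist_iUnion] at hy
  obtain ⟨i, hi⟩ := Finite.exists_min fun i => infEDist y (s i)
  exact mem_iUnion.2 ⟨i, mem_cthickening_iff.2 ((le_iInf hi).trans hy)⟩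

lemma Fin.prod_ite_mem_eq_pow_mul_pow {M : Type*} [CommMonoid M] {n : ℕ}
    (S : Finset (Fin n)) (a b : M) :
    ∏ j, (if j ∈ S then a else b) = a ^ S.card * b ^ (n - S.card) := by
  rw [Finset.prod_ite, Finset.filter_mem_eq_inter, Finset.univ_inter, Finset.prod_const,
    Finset.prod_const, Finset.filter_not, Finset.filter_mem_eq_inter, Finset.univ_inter,
    Finset.card_univ_sdiff, Fintype.card_fin]

section Faces

variable {n : ℕ}

lemma kFace_eq_Icc (x : Fin n → ℝ) (r : ℝ) (S : Finset (Fin n)) (ε : Fin n → Bool) :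
    kFace x r S ε =
      Icc (fun j => if j ∈ S then x j + (if ε j then r else -r) else x j - r)
        (fun j => if j ∈ S then x j + (if ε j then r else -r) else x j + r) := by
  ext y
  simp only [kFace, mem_Icc, Pi.le_def, ← forall_and]
  refine forall_congr' fun j => ?_
  by_cases hj : j ∈ S
  · simp [hj, le_antisymm_iff, and_comm]
  · simp only [hj, false_imp_iff, true_and, not_false_eq_true, true_imp_iff, if_false,
      abs_sub_le_iff]
    constructor <;> rintro ⟨h₁, h₂⟩ <;> constructor <;> linarith

lemma kFace_nonempty (x : Fin n → ℝ) {r : ℝ} (hr : 0 ≤ r) (S : Finset (Fin n))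
    (ε : Fin n → Bool) : (kFace x r S ε).Nonempty := by
  rw [kFace_eq_Icc]
  refine nonempty_Icc.2 fun j => ?_
  split_ifs <;> linarith

lemma sub_mem_kFace_zero {x y : Fin n → ℝ} {r : ℝ} {S : Finset (Fin n)} {ε : Fin n → Bool}
    (hy : y ∈ kFace x r S ε) : y - x ∈ kFace 0 r S ε :=
  ⟨fun j hj => by simp [hy.1 j hj], fun j hj => by simpa using hy.2 j hj⟩

lemma kFace_subset_cthickening_kFace_zero (x : Fin n → ℝ) (r : ℝ) (S : Finset (Fin n))
    (ε : Fin n → Bool) : kFace x r S ε ⊆ cthickening ‖x‖ (kFace 0 r S ε) :=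
  fun y hy => mem_cthickening_of_dist_le y (y - x) _ _ (sub_mem_kFace_zero hy)
    (by rw [dist_eq_norm, sub_sub_cancel])

lemma volume_cthickening_kFace_le (x : Fin n → ℝ) (r : ℝ) (S : Finset (Fin n))
    (ε : Fin n → Bool) {δ : ℝ} (hδ : 0 ≤ δ) :
    volume (cthickening δ (kFace x r S ε)) ≤
      ENNReal.ofReal (2 * δ) ^ S.card * ENNReal.ofReal (2 * r + 2 * δ) ^ (n - S.card) := by
  grw [kFace_eq_Icc, cthickening_Icc_subset _ _ hδ, Real.volume_Icc_pi,
    ← Fin.prod_ite_mem_eq_pow_mul_pow]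
  refine le_of_eq (Finset.prod_congr rfl fun j _ => ?_)
  split_ifs with hj <;> simp only [Pi.add_apply, Pi.sub_apply, hj, ↓reduceIte] <;> ring_nf

end Faces

lemma nonempty_subtype_card_eq_sub (n k : ℕ) : Nonempty {S : Finset (Fin n) // S.card = n - k} :=
  Fintype.card_pos_iff.1 (by simp [Fintype.card_finset_len, Nat.choose_pos])

section Skeleton

variable {n k : ℕ}

lemma skeleton_eq_iUnion (x : Fin n → ℝ) (r : ℝ) :
    skeleton n k x r =
      ⋃ (S : {S : Finset (Fin n) // S.card = n - k}) (ε : Fin n → Bool), kFace x r S ε := by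
  ext y
  simp only [skeleton, mem_iUnion, Subtype.exists, exists_prop]

lemma kFace_subset_skeleton (x : Fin n → ℝ) (r : ℝ) (S : {S : Finset (Fin n) // S.card = n - k})
    (ε : Fin n → Bool) : kFace x r S ε ⊆ skeleton n k x r := by
  rw [skeleton_eq_iUnion]
  exact fun y hy => mem_iUnion₂.2 ⟨S, ε, hy⟩

lemma skeleton_nonempty (x : Fin n → ℝ) {r : ℝ} (hr : 0 ≤ r) : (skeleton n k x r).Nonempty :=
  let ⟨S⟩ := nonempty_subtype_card_eq_sub n k
  (kFace_nonempty x hr S fun _ => true).mono (kFace_subset_skeleton x r S _)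

lemma cthickening_kFace_subset_cthickening_skeleton {x : Fin n → ℝ} {δ : ℝ}
    (hx : ‖x‖ ≤ δ) (r : ℝ) (S : {S : Finset (Fin n) // S.card = n - k}) (ε : Fin n → Bool) :
    cthickening δ (kFace x r S ε) ⊆ cthickening (2 * δ) (skeleton n k 0 r) :=
  calc cthickening δ (kFace x r S ε)
      ⊆ cthickening δ (cthickening ‖x‖ (kFace 0 r S ε)) :=
        cthickening_subset_of_subset _ (kFace_subset_cthickening_kFace_zero x r S ε)
    _ ⊆ cthickening (δ + ‖x‖) (kFace 0 r S ε) :=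
        cthickening_cthickening_subset ((norm_nonneg x).trans hx) (norm_nonneg x) _
    _ ⊆ cthickening (2 * δ) (skeleton n k 0 r) :=
        (cthickening_mono (by linarith) _).trans
          (cthickening_subset_of_subset _ (kFace_subset_skeleton 0 r S ε))

lemma volume_cthickening_skeleton_le (hk : k ≤ n) (x : Fin n → ℝ) (r : ℝ) {δ : ℝ}
    (hδ : 0 ≤ δ) :
    volume (cthickening δ (skeleton n k x r)) ≤
      (n.choose (n - k) * 2 ^ n : ℕ) *
        (ENNReal.ofReal (2 * δ) ^ (n - k) * ENNReal.ofReal (2 * r + 2 * δ) ^ k) :=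
  calc volume (cthickening δ (skeleton n k x r))
      ≤ ∑ S : {S : Finset (Fin n) // S.card = n - k}, ∑ ε : Fin n → Bool,
          volume (cthickening δ (kFace x r S ε)) := by
        rw [skeleton_eq_iUnion, cthickening_iUnion_of_finite]
        refine (measure_iUnion_fintype_le _ _).trans (Finset.sum_le_sum fun S _ => ?_)
        rw [cthickening_iUnion_of_finite]
        exact measure_iUnion_fintype_le _ _
    _ ≤ ∑ _S : {S : Finset (Fin n) // S.card = n - k}, ∑ _ε : Fin n → Bool,
          ENNReal.ofReal (2 * δ) ^ (n - k) * ENNReal.ofReal (2 * r + 2 * δ) ^ k := by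
        gcongr with S _ ε _
        refine (volume_cthickening_kFace_le x r S ε hδ).trans_eq ?_
        rw [S.2, Nat.sub_sub_self hk]
    _ = _ := by
        simp [Fintype.card_finset_len, mul_assoc]

lemma volume_cthickening_skeleton_le_rpow (hk : k ≤ n) {δ : ℝ} (hδ₀ : 0 ≤ δ) (hδ₁ : δ ≤ 1) :
    volume (cthickening (2 * δ) (skeleton n k 0 (3 / 2))) ≤
      ENNReal.ofReal ((n.choose (n - k) * 2 ^ n : ℕ) * 4 ^ (n - k) * 7 ^ k *
        δ ^ ((n : ℝ) - k)) := by
  refine (volume_cthickening_skeleton_le hk 0 (3 / 2) (by positivity)).trans ?_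
  rw [← ENNReal.ofReal_pow (by positivity), ← ENNReal.ofReal_pow (by positivity),
    ← ENNReal.ofReal_mul (by positivity), ← ENNReal.ofReal_natCast,
    ← ENNReal.ofReal_mul (by positivity), ← Nat.cast_sub hk, Real.rpow_natCast]
  refine ENNReal.ofReal_le_ofReal ?_
  calc _ ≤ ((n.choose (n - k) * 2 ^ n : ℕ) : ℝ) * ((2 * (2 * δ)) ^ (n - k) * 7 ^ k) := by
        gcongr; linarith
    _ = _ := by ring

end Skeleton

lemma setAverage_abs_indicator_one {α : Type*} [MeasurableSpace α] {μ : Measure α}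
    {U : Set α} (hU : MeasurableSet U) (T : Set α) :
    ⨍ y in T, |U.indicator (fun _ => (1 : ℝ)) y| ∂μ = (μ.real T)⁻¹ * μ.real (U ∩ T) := by
  have habs : (fun y => |U.indicator (fun _ => (1 : ℝ)) y|) = U.indicator fun _ => 1 :=
    funext fun y => abs_of_nonneg (indicator_nonneg (fun _ _ => zero_le_one) y)
  rw [habs, setAverage_eq, integral_indicator_const _ hU, measureReal_restrict_apply hU,
    smul_eq_mul, smul_eq_mul, mul_one]

lemma measure_cthickening_pos {α : Type*} [PseudoMetricSpace α] [MeasurableSpace α]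
    (μ : Measure α) [μ.IsOpenPosMeasure] {s : Set α} (hs : s.Nonempty) {δ : ℝ} (hδ : 0 < δ) :
    0 < μ (cthickening δ s) :=
  let ⟨x, hx⟩ := hs
  (measure_ball_pos μ x hδ).trans_le
    (measure_mono (ball_subset_closedBall.trans (closedBall_subset_cthickening hx δ)))

lemma one_le_skelMax_indicator {n k : ℕ} {U : Set (Fin n → ℝ)} (hU : MeasurableSet U)
    (hU_fin : volume U ≠ ∞) {δ r : ℝ} {x : Fin n → ℝ} (hr : r ∈ Icc (1 : ℝ) 2)
    (hsub : ∀ S : {S : Finset (Fin n) // S.card = n - k}, ∀ ε,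
      cthickening δ (kFace x r S ε) ⊆ U)
    (hpos : ∀ S : {S : Finset (Fin n) // S.card = n - k}, ∀ ε,
      volume (cthickening δ (kFace x r S ε)) ≠ 0) :
    1 ≤ skelMax n k δ (U.indicator fun _ => 1) x := by
  set avg : ℝ → {S : Finset (Fin n) // S.card = n - k} → (Fin n → Bool) → ℝ :=
    fun r S ε => ⨍ y in cthickening δ (kFace x r S ε), |U.indicator (fun _ => (1 : ℝ)) y|
  have avg_nonneg : ∀ r S ε, 0 ≤ avg r S ε := fun r S ε => by
    simp only [avg, setAverage_abs_indicator_one hU]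
    positivity
  have avg_le_one : ∀ r S ε, avg r S ε ≤ 1 := fun r S ε => by
    simp only [avg, setAverage_abs_indicator_one hU]
    by_cases hT : volume (cthickening δ (kFace x r S ε)) = ∞
    · simp [measureReal_def, hT]
    · exact inv_mul_le_one_of_le₀ (measureReal_mono inter_subset_right hT) measureReal_nonneg
  have avg_eq_one : ∀ S ε, avg r S ε = 1 := fun S ε => by
    simp only [avg, setAverage_abs_indicator_one hU, inter_eq_right.2 (hsub S ε)]
    exact inv_mul_cancel₀ (ENNReal.toReal_ne_zero.2
      ⟨hpos S ε, ne_top_of_le_ne_top hU_fin (measure_mono (hsub S ε))⟩)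
  have hS := nonempty_subtype_card_eq_sub n k
  have inf_le_one : ∀ r, ⨅ S, ⨅ ε, avg r S ε ≤ 1 := fun r =>
    ciInf_le_of_le ⟨0, forall_mem_range.2 fun S => Real.iInf_nonneg (avg_nonneg r S)⟩ hS.some <|
      ciInf_le_of_le ⟨0, forall_mem_range.2 (avg_nonneg r hS.some)⟩ (fun _ => true)
        (avg_le_one _ _ _)
  refine le_ciSup_of_le ⟨1, forall_mem_range.2 fun r =>
    Real.iSup_le (fun _ => inf_le_one r) zero_le_one⟩ r ?_
  rw [ciSup_pos hr]
  exact le_ciInf fun S => le_ciInf fun ε => (avg_eq_one S ε).ge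

lemma measure_rpow_le_eLpNorm_of_one_le {α : Type*} [MeasurableSpace α] {μ : Measure α}
    {E : Set α} (hE : MeasurableSet E) {g : α → ℝ} (hg : ∀ x ∈ E, 1 ≤ g x) {p : ℝ≥0∞}
    (hp : p ≠ 0) (hp_top : p ≠ ∞) :
    μ E ^ (1 / p.toReal) ≤ eLpNorm g p μ := by
  have h := eLpNorm_indicator_const (c := (1 : ℝ)) (μ := μ) hE hp hp_top
  rw [enorm_one, one_mul] at h
  rw [← h]
  refine eLpNorm_mono fun x => ?_
  by_cases hx : x ∈ E
  · simpa [hx] using (hg x hx).trans (le_abs_self _)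
  · simp [hx]

lemma ofReal_mul_eLpNorm_indicator_le {n : ℕ} {U : Set (Fin n → ℝ)} (hU : MeasurableSet U)
    {g : (Fin n → ℝ) → ℝ} {A δ d p q : ℝ} (hA : 0 < A) (hδ : 0 < δ) (hp : 0 < p) (hq : 0 < q)
    (hU_vol : volume U ≤ ENNReal.ofReal (A * δ ^ d)) (hg : ∀ x ∈ closedBall 0 δ, 1 ≤ g x) :
    ENNReal.ofReal (2 ^ ((n : ℝ) / q) / A ^ (1 / p) * δ ^ ((n : ℝ) / q - d / p)) *
        eLpNorm (U.indicator fun _ => (1 : ℝ)) (ENNReal.ofReal p) volume ≤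
      eLpNorm g (ENNReal.ofReal q) volume := by
  have key : 2 ^ ((n : ℝ) / q) / A ^ (1 / p) * δ ^ ((n : ℝ) / q - d / p) * (A * δ ^ d) ^ (1 / p)
      = ((2 * δ) ^ n) ^ (1 / q) := by
    rw [Real.mul_rpow hA.le (by positivity), ← Real.rpow_mul hδ.le, ← Real.rpow_natCast,
      ← Real.rpow_mul (by positivity), Real.mul_rpow zero_le_two hδ.le, Real.rpow_sub hδ]
    field_simp
  have hp0 : ENNReal.ofReal p ≠ 0 := ENNReal.ofReal_ne_zero_iff.2 hp
  have hq0 : ENNReal.ofReal q ≠ 0 := ENNReal.ofReal_ne_zero_iff.2 hq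
  rw [eLpNorm_indicator_const hU hp0 ENNReal.ofReal_ne_top, enorm_one, one_mul,
    ENNReal.toReal_ofReal hp.le]
  calc _ ≤ ENNReal.ofReal (2 ^ ((n : ℝ) / q) / A ^ (1 / p) * δ ^ ((n : ℝ) / q - d / p)) *
        ENNReal.ofReal (A * δ ^ d) ^ (1 / p) := by gcongr
    _ = volume (closedBall (0 : Fin n → ℝ) δ) ^ (1 / q) := by
      rw [Real.volume_pi_closedBall _ hδ.le, Fintype.card_fin,
        ENNReal.ofReal_rpow_of_nonneg (by positivity) (by positivity),
        ENNReal.ofReal_rpow_of_nonneg (by positivity) (by positivity),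
        ← ENNReal.ofReal_mul (by positivity), key]
    _ ≤ eLpNorm g (ENNReal.ofReal q) volume := by
      simpa [ENNReal.toReal_ofReal hq.le] using
        measure_rpow_le_eLpNorm_of_one_le measurableSet_closedBall hg hq0 ENNReal.ofReal_ne_top

theorem skelMax_lower_bound_offdiagonal_general (n k : ℕ) (hk : k < n)
    (p q : ℝ) (hp : 1 < p) (hpq : p ≤ q) :
    ∃ c > 0, ∀ δ ∈ Set.Ioo (0 : ℝ) 1, ∃ f : (Fin n → ℝ) → ℝ,
      MemLp f (ENNReal.ofReal p) volume ∧
      eLpNorm f (ENNReal.ofReal p) volume ≠ 0 ∧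
      ENNReal.ofReal (c * δ ^ ((n : ℝ) / q - ((n : ℝ) - k) / p)) *
          eLpNorm f (ENNReal.ofReal p) volume ≤
        eLpNorm (skelMax n k δ f) (ENNReal.ofReal q) volume := by
  have hp0 : 0 < p := zero_lt_one.trans hp
  have hq0 : 0 < q := hp0.trans_le hpq
  set A : ℝ := (n.choose (n - k) * 2 ^ n : ℕ) * 4 ^ (n - k) * 7 ^ k
  have hA : 0 < A := by have := Nat.choose_pos (Nat.sub_le n k); positivity
  refine ⟨2 ^ ((n : ℝ) / q) / A ^ (1 / p), by positivity, fun δ ⟨hδ0, hδ1⟩ => ?_⟩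
  set U := cthickening (2 * δ) (skeleton n k 0 (3 / 2))
  have hU : MeasurableSet U := isClosed_cthickening.measurableSet
  have hU_vol : volume U ≤ ENNReal.ofReal (A * δ ^ ((n : ℝ) - k)) :=
    volume_cthickening_skeleton_le_rpow hk.le hδ0.le hδ1.le
  have hU_fin : volume U ≠ ∞ := ne_top_of_le_ne_top ENNReal.ofReal_ne_top hU_vol
  have hU_pos : volume U ≠ 0 :=
    (measure_cthickening_pos volume (skeleton_nonempty 0 (by norm_num)) (by positivity)).ne'
  refine ⟨U.indicator fun _ => 1, memLp_indicator_const _ hU _ (Or.inr hU_fin), ?_,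
    ofReal_mul_eLpNorm_indicator_le hU hA hδ0 hp0 hq0 hU_vol fun x hx => ?_⟩
  · simp [eLpNorm_indicator_const hU (ENNReal.ofReal_ne_zero_iff.2 hp0) ENNReal.ofReal_ne_top,
      hU_pos, hU_fin]
  · exact one_le_skelMax_indicator hU hU_fin (r := 3 / 2) (by norm_num)
      (fun S ε => cthickening_kFace_subset_cthickening_skeleton (by simpa using hx) _ S ε)
      (fun S ε => (measure_cthickening_pos volume (kFace_nonempty x (by norm_num) S ε) hδ0).ne')

/-- lower bound, off-diagonal region `q > q*·p`.
For `n ≥ 2`, `0 ≤ k < n`, `q* = 2n²/((n-k)(2n-1))` and `1 < p ≤ q < ∞` with `q > q*·p`,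
there is `c = c(p,q,k,n) > 0` such that for every `δ ∈ (0,1)` there is a nonzero
`f ∈ L^p(ℝⁿ)` with `‖M^k_δ f‖_{L^q} ≥ c δ^{n/q - (n-k)/p} ‖f‖_{L^p}`. -/
theorem skelMax_lower_bound_offdiagonal (n k : ℕ) (hn : 2 ≤ n) (hk : k < n)
    (p q : ℝ) (hp : 1 < p) (hpq : p ≤ q)
    (hq : 2 * (n : ℝ) ^ 2 / (((n : ℝ) - k) * (2 * (n : ℝ) - 1)) * p < q) :
    ∃ c > 0, ∀ δ ∈ Set.Ioo (0 : ℝ) 1, ∃ f : (Fin n → ℝ) → ℝ,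
      MemLp f (ENNReal.ofReal p) volume ∧
      eLpNorm f (ENNReal.ofReal p) volume ≠ 0 ∧
      ENNReal.ofReal (c * δ ^ ((n : ℝ) / q - ((n : ℝ) - k) / p)) *
          eLpNorm f (ENNReal.ofReal p) volume ≤
        eLpNorm (skelMax n k δ f) (ENNReal.ofReal q) volume :=
  skelMax_lower_bound_offdiagonal_general n k hk p q hp hpq
end
end

section
/- Let n ≥ 2 and 0 ≤ k < n be integers and 1 ≤ p, q < ∞. There exists a constant C = C(k,n) > 0 such that for every δ ∈ (0,1) with 1/(3δ) ∈ ℕ and every f ∈ L^p(ℝ^n): ‖M^k_δ f‖_{L^q(Q_0)} ≤ C · sup ‖M̃^k_{ρ,3δ} f‖_{L^q(Q_0)}, where the (finite) supremum is taken over all functions ρ : {x_1,…,x_u} → [1,2] ∩ 3δℤ on the centers of the grid of width 3δ and over all selections assigning to each i a k-face ℓ^i of S_k(x_i, ρ(x_i)), and M̃^k_{ρ,3δ} is the linearized maximal operator of width 3δ built from ρ and this selection. -/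
open MeasureTheory Metric Set

noncomputable section

/-!
Let `c` be the centre of the grid cube of width `3δ` containing `x`, so `|x j - c j| ≤ 3δ/2`.
Given `r ∈ [1,2]`, fix the `n - k` coordinates in which `|x j - c j|` is largest, let `b` separate
them from the free ones, and pick `ρ ∈ 3δℤ ∩ [1,2]` with `r - ρ ∈ [-(δ + b), 2δ - b]`, a window
of length `3δ`. Choosing each sign so that `x j - c j` and `r - ρ` partially cancel, the
`δ`-neighbourhood of that face of the cube `(x, r)` lies in the `3δ`-neighbourhood of the
corresponding face of the cube `(c, ρ)`, whose volume is at most `3ⁿ` times larger. As `M^k_δ`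
takes the minimum over faces, `M^k_δ f (x)` is at most `3ⁿ` times the best average over admissible
faces at `c`; selecting that best face on every grid cube gives one linearization dominating
`M^k_δ f` pointwise on `Q₀`.
-/

open scoped ENNReal

theorem cthickening_univ_pi {ι : Type*} [Fintype ι] {X : ι → Type*}
    [∀ i, PseudoMetricSpace (X i)] {s : ∀ i, Set (X i)} (hs : ∀ i, IsCompact (s i)) {δ : ℝ}
    (hδ : 0 ≤ δ) : cthickening δ (univ.pi s) = univ.pi fun i => cthickening δ (s i) := by
  ext y
  simp only [(isCompact_univ_pi hs).cthickening_eq_biUnion_closedBall hδ,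
    (hs _).cthickening_eq_biUnion_closedBall hδ, closedBall_pi _ hδ, mem_iUnion, mem_univ_pi,
    exists_prop]
  refine ⟨fun ⟨a, ha, hya⟩ i => ⟨a i, ha i, hya i⟩, fun h => ?_⟩
  choose a ha hya using h
  exact ⟨a, ha, hya⟩

theorem Real.volume_real_univ_pi_closedBall {ι : Type*} [Fintype ι] (a : ι → ℝ) {s : ι → ℝ}
    (hs : ∀ i, 0 ≤ s i) :
    volume.real (univ.pi fun i => closedBall (a i) (s i)) = ∏ i, 2 * s i := by
  simp only [measureReal_def, volume_pi_pi, Real.volume_closedBall, ENNReal.toReal_prod]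
  exact Finset.prod_congr rfl fun i _ => ENNReal.toReal_ofReal (by linarith [hs i])

theorem setAverage_nonneg {α : Type*} [MeasurableSpace α] {μ : Measure α} {f : α → ℝ}
    (hf : ∀ y, 0 ≤ f y) (s : Set α) : 0 ≤ ⨍ y in s, f y ∂μ := by
  rw [setAverage_eq]
  exact smul_nonneg (inv_nonneg.2 measureReal_nonneg) (integral_nonneg hf)

theorem setAverage_le_mul_setAverage {α : Type*} [MeasurableSpace α] {μ : Measure α}
    {f : α → ℝ} {s t : Set α} {C : ℝ} (hf : ∀ y, 0 ≤ f y) (hft : IntegrableOn f t μ)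
    (hst : s ⊆ t) (hs : 0 < μ.real s) (ht : μ t ≠ ∞) (hC : μ.real t ≤ C * μ.real s) :
    ⨍ y in s, f y ∂μ ≤ C * ⨍ y in t, f y ∂μ := by
  have ht0 : 0 < μ.real t := hs.trans_le (measureReal_mono hst ht)
  have hst_int : ∫ y in s, f y ∂μ ≤ ∫ y in t, f y ∂μ :=
    setIntegral_mono_set hft (.of_forall hf) hst.eventuallyLE
  have hinv : (μ.real s)⁻¹ ≤ C * (μ.real t)⁻¹ := by
    rw [← div_eq_mul_inv, le_div_iff₀ ht0, ← div_eq_inv_mul, div_le_iff₀ hs]; linarith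
  rw [setAverage_eq, setAverage_eq, smul_eq_mul, smul_eq_mul, ← mul_assoc]
  exact mul_le_mul hinv hst_int (integral_nonneg hf) ((inv_pos.2 hs).le.trans hinv)

theorem Fin.exists_finset_card_eq_forall_le {n : ℕ} {α : Type*} [LinearOrder α] (w : Fin n → α)
    {t : ℕ} (ht : t ≤ n) : ∃ S : Finset (Fin n), S.card = t ∧ ∀ i ∈ S, ∀ j ∉ S, w j ≤ w i := by
  refine ⟨((Finset.univ.filter fun a : Fin n => a < n - t).map (Tuple.sort w).toEmbedding)ᶜ,
    ?_, ?_⟩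
  · rw [Finset.card_compl, Finset.card_map, Fin.card_filter_val_lt, Fintype.card_fin]
    omega
  · simp only [Finset.mem_compl, Finset.mem_map_equiv, Finset.mem_filter, Finset.mem_univ,
      true_and, not_lt, not_le]
    intro i hi j hj
    simpa using
      Tuple.monotone_sort w (show (Tuple.sort w).symm j ≤ (Tuple.sort w).symm i by omega)

theorem exists_finset_card_eq_threshold {n : ℕ} (w : Fin n → ℝ) {B : ℝ} (hB : 0 ≤ B)
    (hw : ∀ j, w j ∈ Icc 0 B) {t : ℕ} (ht : t ≤ n) :
    ∃ S : Finset (Fin n), S.card = t ∧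
      ∃ b ∈ Icc 0 B, (∀ j ∉ S, w j ≤ b) ∧ ∀ i ∈ S, b ≤ w i := by
  obtain ⟨S, hS, htop⟩ := Fin.exists_finset_card_eq_forall_le w ht
  set b := (insert 0 (Sᶜ.image w)).max' (Finset.insert_nonempty _ _)
  have hle_b : ∀ y ∈ insert 0 (Sᶜ.image w), y ≤ b := fun y hy => Finset.le_max' _ y hy
  refine ⟨S, hS, b, ⟨hle_b 0 (Finset.mem_insert_self _ _), Finset.max'_le _ _ _ ?_⟩,
    fun j hj => hle_b _ (Finset.mem_insert_of_mem (Finset.mem_image_of_mem w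
      (Finset.mem_compl.2 hj))), fun i hi => Finset.max'_le _ _ _ ?_⟩
  · simp only [Finset.forall_mem_insert, Finset.forall_mem_image, Finset.mem_compl]
    exact ⟨hB, fun j _ => (hw j).2⟩
  · simp only [Finset.forall_mem_insert, Finset.forall_mem_image, Finset.mem_compl]
    exact ⟨(hw i).1, fun j hj => htop i hi j hj⟩

theorem exists_abs_add_ite_eq (d e : ℝ) :
    ∃ s : Bool, |d + (if s then e else -e)| = |(|d| - |e|)| := by
  rcases le_total 0 d with hd | hd <;> rcases le_total 0 e with he | he
  · exact ⟨false, by rw [if_neg Bool.false_ne_true, abs_of_nonneg hd, abs_of_nonneg he]; ring_nf⟩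
  · exact ⟨true, by rw [if_pos rfl, abs_of_nonneg hd, abs_of_nonpos he]; ring_nf⟩
  · exact ⟨true, by rw [if_pos rfl, abs_of_nonpos hd, abs_of_nonneg he, ← abs_neg]; ring_nf⟩
  · exact ⟨false, by
      rw [if_neg Bool.false_ne_true, abs_of_nonpos hd, abs_of_nonpos he, ← abs_neg]; ring_nf⟩

section kFace

variable {n : ℕ}

def kFaceCenter (x : Fin n → ℝ) (r : ℝ) (S : Finset (Fin n)) (ε : Fin n → Bool) :
    Fin n → ℝ :=
  fun j => if j ∈ S then x j + (if ε j then r else -r) else x j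

def kFaceRadius (r : ℝ) (S : Finset (Fin n)) : Fin n → ℝ :=
  fun j => if j ∈ S then 0 else r

theorem kFaceRadius_nonneg {r : ℝ} (hr : 0 ≤ r) (S : Finset (Fin n)) (j : Fin n) :
    0 ≤ kFaceRadius r S j := by
  unfold kFaceRadius; split_ifs <;> simp [hr]

theorem kFace_eq_univ_pi (x : Fin n → ℝ) (r : ℝ) (S : Finset (Fin n)) (ε : Fin n → Bool) :
    kFace x r S ε = univ.pi fun j => closedBall (kFaceCenter x r S ε j) (kFaceRadius r S j) := by
  ext y
  simp only [kFace, kFaceCenter, kFaceRadius, mem_univ_pi, Real.dist_eq, mem_closedBall]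
  refine ⟨fun ⟨hS, hSc⟩ j => ?_, fun h => ⟨fun j hj => ?_, fun j hj => ?_⟩⟩
  · by_cases hj : j ∈ S <;> simp [hj, hS, hSc]
  · simpa [hj, sub_eq_zero] using h j
  · simpa [hj] using h j

theorem cthickening_kFace (x : Fin n → ℝ) {r δ : ℝ} (hr : 0 ≤ r) (hδ : 0 ≤ δ)
    (S : Finset (Fin n)) (ε : Fin n → Bool) :
    cthickening δ (kFace x r S ε) =
      univ.pi fun j => closedBall (kFaceCenter x r S ε j) (δ + kFaceRadius r S j) := by
  rw [kFace_eq_univ_pi, cthickening_univ_pi (fun j => isCompact_closedBall _ _) hδ]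
  simp only [cthickening_closedBall hδ (kFaceRadius_nonneg hr S _)]

theorem volume_real_cthickening_kFace (x : Fin n → ℝ) {r δ : ℝ} (hr : 0 ≤ r) (hδ : 0 ≤ δ)
    (S : Finset (Fin n)) (ε : Fin n → Bool) :
    volume.real (cthickening δ (kFace x r S ε)) = ∏ j, 2 * (δ + kFaceRadius r S j) := by
  rw [cthickening_kFace x hr hδ, Real.volume_real_univ_pi_closedBall]
  exact fun j => add_nonneg hδ (kFaceRadius_nonneg hr S j)

theorem volume_real_cthickening_kFace_le (x c : Fin n → ℝ) {r ρ δ lam : ℝ} (hr : 0 ≤ r)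
    (hρ : 0 ≤ ρ) (hδ : 0 ≤ δ) (hlam : 0 ≤ lam) (hρr : ρ ≤ lam * r) (S : Finset (Fin n))
    (ε : Fin n → Bool) :
    volume.real (cthickening (lam * δ) (kFace c ρ S ε)) ≤
      lam ^ n * volume.real (cthickening δ (kFace x r S ε)) := by
  rw [volume_real_cthickening_kFace c hρ (mul_nonneg hlam hδ),
    volume_real_cthickening_kFace x hr hδ]
  calc ∏ j, 2 * (lam * δ + kFaceRadius ρ S j) ≤ ∏ j, lam * (2 * (δ + kFaceRadius r S j)) := ?_
    _ = _ := by rw [Finset.prod_mul_distrib, Finset.prod_const, Finset.card_univ,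
      Fintype.card_fin]
  refine Finset.prod_le_prod (fun j _ => ?_) fun j _ => ?_
  · have := kFaceRadius_nonneg hρ S j; positivity
  · unfold kFaceRadius; split_ifs <;> nlinarith

theorem cthickening_kFace_subset {x c : Fin n → ℝ} {r ρ δ η : ℝ} (hr : 0 ≤ r) (hρ : 0 ≤ ρ)
    (hδ : 0 ≤ δ) (hη : 0 ≤ η) {S : Finset (Fin n)} {ε : Fin n → Bool}
    (hfixed : ∀ j ∈ S, |x j - c j + (if ε j then r - ρ else -(r - ρ))| ≤ η - δ)
    (hfree : ∀ j ∉ S, |x j - c j| + r + δ ≤ ρ + η) :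
    cthickening δ (kFace x r S ε) ⊆ cthickening η (kFace c ρ S ε) := by
  rw [cthickening_kFace x hr hδ, cthickening_kFace c hρ hη]
  refine pi_mono fun j _ => closedBall_subset_closedBall' ?_
  by_cases hj : j ∈ S
  · have hsub : x j + (if ε j then r else -r) - (c j + (if ε j then ρ else -ρ)) =
        x j - c j + (if ε j then r - ρ else -(r - ρ)) := by split_ifs <;> ring
    simp only [kFaceCenter, kFaceRadius, hj, if_true, Real.dist_eq, hsub]
    linarith [hfixed j hj]
  · have := hfree j hj
    simp only [kFaceCenter, kFaceRadius, hj, if_false, Real.dist_eq]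
    linarith

end kFace

theorem exists_grid_radius {η a : ℝ} {m : ℕ} (hη : 0 < η) (hm : η * m = 1) (ha : a ≤ 2) :
    ∃ i : ℕ, i ≤ m ∧ a ≤ η * (m + i) ∧ η * (m + i) ≤ max 1 (a + η) := by
  set c := ⌈a / η⌉₊
  have hc2m : c ≤ 2 * m := Nat.ceil_le.2 (by rw [div_le_iff₀ hη]; push_cast; nlinarith)
  have hradius : η * (m + (c - m : ℕ)) = max 1 (η * c) := by
    rw [← hm, ← mul_max_of_nonneg _ _ hη.le, ← Nat.cast_max, ← Nat.cast_add]
    congr 2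
    omega
  refine ⟨c - m, by omega, ?_, ?_⟩ <;> rw [hradius]
  · exact le_max_of_le_right ((div_le_iff₀' hη).1 (Nat.le_ceil _))
  · refine max_le (le_max_left _ _) ?_
    rcases le_total a 0 with ha0 | ha0
    · simp [c, Nat.ceil_eq_zero.2 (div_nonpos_of_nonpos_of_nonneg ha0 hη.le)]
    · have hc := Nat.ceil_lt_add_one (div_nonneg ha0 hη.le)
      refine le_max_of_le_right ?_
      calc η * c ≤ η * (a / η + 1) := by gcongr
        _ = a + η := by field_simp

theorem abs_sub_gridCenter_zOf_le {n m : ℕ} {η : ℝ} (hη : 0 < η) (hm : 0 < m) (hηm : η * m = 1)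
    {x : Fin n → ℝ} (hx : x ∈ Q0 n) (j : Fin n) :
    |x j - gridCenter η (zOf η hm x) j| ≤ η / 2 := by
  obtain ⟨hx0, hx1⟩ := hx j (mem_univ j)
  set y := x j / η
  have hfloor0 : 0 ≤ ⌊y⌋ := Int.floor_nonneg.2 (div_nonneg hx0 hη.le)
  have hfloorm : ⌊y⌋ < m := Int.floor_lt.2 (by rw [div_lt_iff₀ hη]; push_cast; linarith)
  have hz : ((zOf η hm x j : ℕ) : ℝ) = ⌊y⌋ := by
    have : ((⌊y⌋.toNat % m : ℕ) : ℤ) = ⌊y⌋ := by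
      rw [Nat.mod_eq_of_lt (by omega), Int.toNat_of_nonneg hfloor0]
    exact_mod_cast this
  have hxj : x j - gridCenter η (zOf η hm x) j = η * (Int.fract y - 1 / 2) := by
    rw [gridCenter, hz, Int.fract, mul_sub, mul_sub, mul_div_cancel₀ _ hη.ne']
    ring
  have hfract : |Int.fract y - 1 / 2| ≤ 1 / 2 :=
    abs_le.2 ⟨by linarith [Int.fract_nonneg y], by linarith [Int.fract_lt_one y]⟩
  rw [hxj, abs_mul, abs_of_pos hη]
  linarith [mul_le_mul_of_nonneg_left hfract hη.le]

theorem exists_kFace_cthickening_subset {n m : ℕ} {δ : ℝ} (hδ : 0 < δ) (hm : 3 * δ * m = 1)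
    {x c : Fin n → ℝ} (hxc : ∀ j, |x j - c j| ≤ 3 * δ / 2) {r : ℝ} (hr : r ∈ Icc (1 : ℝ) 2)
    {t : ℕ} (ht : t ≤ n) :
    ∃ S : Finset (Fin n), S.card = t ∧ ∃ (ε : Fin n → Bool) (i : ℕ), i ≤ m ∧
      cthickening δ (kFace x r S ε) ⊆ cthickening (3 * δ) (kFace c (3 * δ * (m + i)) S ε) := by
  obtain ⟨S, hS, b, ⟨hb0, hb⟩, hfree, hfixed⟩ := exists_finset_card_eq_threshold
    (fun j => |x j - c j|) (by positivity) (fun j => ⟨abs_nonneg _, hxc j⟩) ht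
  obtain ⟨i, hi, hlo, hhi⟩ := exists_grid_radius (a := r - 2 * δ + b) (by positivity) hm
    (by linarith [hr.2])
  set ρ := 3 * δ * (m + i)
  have hρ0 : 0 ≤ ρ := by positivity
  have he : -(δ + b) ≤ r - ρ := by
    rcases le_max_iff.1 hhi with h | h <;> linarith [hr.1]
  choose ε hε using fun j => exists_abs_add_ite_eq (x j - c j) (r - ρ)
  refine ⟨S, hS, ε, i, hi, cthickening_kFace_subset (by linarith [hr.1]) hρ0 hδ.le
    (by positivity) (fun j hj => ?_) fun j hj => ?_⟩
  · have hbj := hfixed j hj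
    have hxcj := hxc j
    have hρr : |r - ρ| ≤ 2 * δ + b := abs_le.2 ⟨by linarith, by linarith⟩
    rw [hε j, abs_sub_le_iff]
    constructor <;> linarith [abs_nonneg (r - ρ)]
  · linarith [hfree j hj]

theorem exists_kFace_setAverage_le {n m : ℕ} {δ : ℝ} {f : (Fin n → ℝ) → ℝ}
    (hf : LocallyIntegrable f volume) (hδ : 0 < δ) (hm : 3 * δ * m = 1) {x c : Fin n → ℝ}
    (hxc : ∀ j, |x j - c j| ≤ 3 * δ / 2) {r : ℝ} (hr : r ∈ Icc (1 : ℝ) 2) {t : ℕ} (ht : t ≤ n) :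
    ∃ S : Finset (Fin n), S.card = t ∧ ∃ (ε : Fin n → Bool) (i : ℕ), i ≤ m ∧
      ⨍ y in cthickening δ (kFace x r S ε), |f y| ≤
        3 ^ n * ⨍ y in cthickening (3 * δ) (kFace c (3 * δ * (m + i)) S ε), |f y| := by
  obtain ⟨S, hS, ε, i, hi, hsub⟩ := exists_kFace_cthickening_subset hδ hm hxc hr ht
  have hρ0 : 0 ≤ 3 * δ * (m + i) := by positivity
  have hρ2 : 3 * δ * (m + i) ≤ 2 := by
    have : (i : ℝ) ≤ m := by exact_mod_cast hi
    nlinarith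
  have hr0 : 0 ≤ r := by linarith [hr.1]
  have hbig : IsCompact (cthickening (3 * δ) (kFace c (3 * δ * (m + i)) S ε)) := by
    rw [cthickening_kFace c hρ0 (by positivity)]
    exact isCompact_univ_pi fun j => isCompact_closedBall _ _
  have hsmall : 0 < volume.real (cthickening δ (kFace x r S ε)) := by
    rw [volume_real_cthickening_kFace x hr0 hδ.le]
    exact Finset.prod_pos fun j _ => by have := kFaceRadius_nonneg hr0 S j; positivity
  have hvol := volume_real_cthickening_kFace_le x c hr0 hρ0 hδ.le (lam := 3) (by norm_num)
    (by linarith [hr.1]) S ε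
  exact ⟨S, hS, ε, i, hi, setAverage_le_mul_setAverage (fun y => abs_nonneg _)
    (hf.integrableOn_isCompact hbig).abs hsub hsmall hbig.measure_ne_top hvol⟩

theorem skelMax_nonneg (n k : ℕ) (δ : ℝ) (f : (Fin n → ℝ) → ℝ) (x : Fin n → ℝ) :
    0 ≤ skelMax n k δ f x :=
  Real.iSup_nonneg fun _ => Real.iSup_nonneg fun _ => Real.iInf_nonneg fun _ =>
    Real.iInf_nonneg fun _ => setAverage_nonneg (fun _ => abs_nonneg _) _

theorem skelMax_le_of_forall_exists_face {n k : ℕ} {δ : ℝ} {f : (Fin n → ℝ) → ℝ} {x : Fin n → ℝ}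
    {B : ℝ} (hB : 0 ≤ B)
    (h : ∀ r ∈ Icc (1 : ℝ) 2, ∃ S : Finset (Fin n), S.card = n - k ∧
      ∃ ε : Fin n → Bool, ⨍ y in cthickening δ (kFace x r S ε), |f y| ≤ B) :
    skelMax n k δ f x ≤ B := by
  unfold skelMax
  refine Real.iSup_le (fun r => Real.iSup_le (fun hr => ?_) hB) hB
  obtain ⟨S, hS, ε, hle⟩ := h r hr
  have havg : ∀ S ε, 0 ≤ ⨍ y in cthickening δ (kFace x r S ε), |f y| :=
    fun _ _ => setAverage_nonneg (fun _ => abs_nonneg _) _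
  have hbddS : BddBelow (range fun S : {S : Finset (Fin n) // S.card = n - k} =>
      ⨅ ε, ⨍ y in cthickening δ (kFace x r S.1 ε), |f y|) :=
    ⟨0, by rintro _ ⟨S', rfl⟩; exact Real.iInf_nonneg fun ε' => havg _ ε'⟩
  have hbddε : BddBelow (range fun ε => ⨍ y in cthickening δ (kFace x r S ε), |f y|) :=
    ⟨0, by rintro _ ⟨ε', rfl⟩; exact havg _ ε'⟩
  exact (ciInf_le hbddS ⟨S, hS⟩).trans ((ciInf_le hbddε ε).trans hle)

theorem exists_skelMax_le_linMax {n k m : ℕ} {δ : ℝ} (hδ : 0 < δ) (hm : 0 < m)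
    (hδm : 3 * δ * m = 1) {f : (Fin n → ℝ) → ℝ} (hf : LocallyIntegrable f volume) :
    ∃ ρ : (Fin n → Fin m) → ℝ, (∀ z, ρ z ∈ Icc (1 : ℝ) 2 ∧ ∃ t : ℤ, ρ z = 3 * δ * t) ∧
      ∃ S : (Fin n → Fin m) → Finset (Fin n), (∀ z, (S z).card = n - k) ∧
      ∃ ε : (Fin n → Fin m) → Fin n → Bool,
        ∀ x ∈ Q0 n, skelMax n k δ f x ≤ 3 ^ n * linMax (3 * δ) hm ρ S ε f x := by
  let radius (i : Fin (m + 1)) : ℝ := 3 * δ * (m + (i : ℕ))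
  let avg (z : Fin n → Fin m)
      (a : Fin (m + 1) × {S : Finset (Fin n) // S.card = n - k} × (Fin n → Bool)) : ℝ :=
    ⨍ y in cthickening (3 * δ) (kFace (gridCenter (3 * δ) z) (radius a.1) a.2.1 a.2.2), |f y|
  obtain ⟨S₀, -, hS₀⟩ := Finset.exists_subset_card_eq (s := Finset.univ)
    (show n - k ≤ (Finset.univ : Finset (Fin n)).card by simp)
  have : Nonempty {S : Finset (Fin n) // S.card = n - k} := ⟨⟨S₀, hS₀⟩⟩
  choose best hbest using fun z => Finite.exists_max (avg z)
  have hradius (i : Fin (m + 1)) : radius i ∈ Icc (1 : ℝ) 2 := by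
    have : ((i : ℕ) : ℝ) ≤ m := by exact_mod_cast Nat.lt_succ_iff.1 i.2
    have : (0 : ℝ) ≤ (i : ℕ) := Nat.cast_nonneg _
    constructor <;> nlinarith
  refine ⟨fun z => radius (best z).1, fun z => ⟨hradius _, m + ((best z).1 : ℕ), by
      simp [radius]⟩, fun z => (best z).2.1, fun z => (best z).2.1.2, fun z => (best z).2.2,
    fun x hx => skelMax_le_of_forall_exists_face
      (mul_nonneg (by positivity) (setAverage_nonneg (fun _ => abs_nonneg _) _)) fun r hr => ?_⟩
  obtain ⟨S, hS, ε, i, hi, hle⟩ := exists_kFace_setAverage_le hf hδ hδm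
    (abs_sub_gridCenter_zOf_le (by positivity) hm hδm hx) hr (Nat.sub_le n k)
  exact ⟨S, hS, ε, hle.trans (mul_le_mul_of_nonneg_left
    (hbest _ ⟨⟨i, Nat.lt_succ_of_le hi⟩, ⟨S, hS⟩, ε⟩) (by positivity))⟩

theorem skelMax_le_sup_linMax_general (n k : ℕ) (p q : ℝ) (hp : 1 ≤ p) :
    ∃ C > 0, ∀ δ ∈ Set.Ioo (0 : ℝ) 1, ∀ (m : ℕ) (hm : 0 < m), 3 * δ * m = 1 →
      ∀ f : (Fin n → ℝ) → ℝ, MemLp f (ENNReal.ofReal p) volume →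
      eLpNorm (skelMax n k δ f) (ENNReal.ofReal q) (volume.restrict (Q0 n)) ≤
        ENNReal.ofReal C *
          ⨆ (ρ : (Fin n → Fin m) → ℝ)
            (_ : ∀ z, ρ z ∈ Set.Icc (1 : ℝ) 2 ∧ ∃ t : ℤ, ρ z = 3 * δ * t)
            (S : (Fin n → Fin m) → Finset (Fin n)) (_ : ∀ z, (S z).card = n - k)
            (ε : (Fin n → Fin m) → Fin n → Bool),
            eLpNorm (linMax (3 * δ) hm ρ S ε f) (ENNReal.ofReal q)
              (volume.restrict (Q0 n)) := by
  refine ⟨3 ^ n, by positivity, fun δ ⟨hδ, _⟩ m hm hδm f hf => ?_⟩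
  obtain ⟨ρ, hρ, S, hS, ε, hdom⟩ := exists_skelMax_le_linMax (k := k) hδ hm hδm
    (hf.locallyIntegrable (ENNReal.one_le_ofReal.2 hp))
  have hQ0 : MeasurableSet (Q0 n) := MeasurableSet.univ_pi fun _ => measurableSet_Ico
  calc eLpNorm (skelMax n k δ f) (ENNReal.ofReal q) (volume.restrict (Q0 n))
      ≤ ENNReal.ofReal (3 ^ n) *
          eLpNorm (linMax (3 * δ) hm ρ S ε f) (ENNReal.ofReal q) (volume.restrict (Q0 n)) := by
        refine eLpNorm_le_mul_eLpNorm_of_ae_le_mul ((ae_restrict_iff' hQ0).2 (.of_forall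
          fun x hx => ?_)) _
        rw [Real.norm_of_nonneg (skelMax_nonneg n k δ f x)]
        exact (hdom x hx).trans (by gcongr; exact Real.le_norm_self _)
    _ ≤ _ := by
        gcongr
        exact le_iSup_of_le ρ <| le_iSup_of_le hρ <| le_iSup_of_le S <| le_iSup_of_le hS <|
          le_iSup (fun ε => eLpNorm (linMax (3 * δ) hm ρ S ε f) (ENNReal.ofReal q)
            (volume.restrict (Q0 n))) ε

/-- Lemma 2.6 of OS18: domination of `M^k_δ` by the linearized operators.
For `n ≥ 2`, `0 ≤ k < n` and `1 ≤ p, q < ∞`, there is `C = C(k,n) > 0` such that for every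
`δ ∈ (0,1)` with `1/(3δ) = m ∈ ℕ` and every `f ∈ L^p(ℝⁿ)`,
`‖M^k_δ f‖_{L^q(Q₀)} ≤ C · sup_{ρ, face selection} ‖M̃^k_{ρ,3δ} f‖_{L^q(Q₀)}`,
the supremum being over all `ρ : {x_1,…,x_u} → [1,2] ∩ 3δℤ` on the centers of the grid of
width `3δ` and all selections of one `k`-face of each skeleton `S_k(x_i, ρ(x_i))`. -/
theorem skelMax_le_sup_linMax (n k : ℕ) (hn : 2 ≤ n) (hk : k < n)
    (p q : ℝ) (hp : 1 ≤ p) (hq : 1 ≤ q) :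
    ∃ C > 0, ∀ δ ∈ Set.Ioo (0 : ℝ) 1, ∀ (m : ℕ) (hm : 0 < m), 3 * δ * m = 1 →
      ∀ f : (Fin n → ℝ) → ℝ, MemLp f (ENNReal.ofReal p) volume →
      eLpNorm (skelMax n k δ f) (ENNReal.ofReal q) (volume.restrict (Q0 n)) ≤
        ENNReal.ofReal C *
          ⨆ (ρ : (Fin n → Fin m) → ℝ)
            (_ : ∀ z, ρ z ∈ Set.Icc (1 : ℝ) 2 ∧ ∃ t : ℤ, ρ z = 3 * δ * t)
            (S : (Fin n → Fin m) → Finset (Fin n)) (_ : ∀ z, (S z).card = n - k)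
            (ε : (Fin n → Fin m) → Fin n → Bool),
            eLpNorm (linMax (3 * δ) hm ρ S ε f) (ENNReal.ofReal q)
              (volume.restrict (Q0 n)) :=
  skelMax_le_sup_linMax_general n k p q hp
end
end

section
/- Let n ≥ 1 be an integer, τ ∈ ℝ, δ ∈ (0,1), α ≥ 0, β < 1 and H > 0. Let Ω ⊆ ℝ^n be a Borel set, I a nonempty index set, and for each x ∈ Ω let {A_{x,r}}_{r∈I} be a family of Borel subsets of ℝ^n with 0 < |A_{x,r}| < ∞ for all r, with inf_{r∈I} |A_{x,r}| ≥ δ^τ, and with diam({x} ∪ ⋃_{r∈I} A_{x,r}) ≤ C_0 for a constant C_0 independent of x. Define T f(x) = sup_{r∈I} |A_{x,r}|^{−1} ∫_{A_{x,r}} |f(y)| dy. Assume: for every Borel set E ⊆ ℝ^n of finite measure, every λ ∈ (0,1], every maximal δ-separated sequence x_1,…,x_m in the set F = {x ∈ Ω : T 1_E(x) > λ}, and every choice of indices r_1,…,r_m ∈ I with |A_{x_j,r_j} ∩ E| > λ |A_{x_j,r_j}| for each j, the smallest integer μ such that #{ j ∈ {1,…,m} : |{x ∈ A_{x_j,r_j}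 ∩ E : Σ_{i=1}^m 1_{A_{x_i,r_i} ∩ E}(x) ≤ μ}| ≥ (λ/2)|A_{x_j,r_j}| } ≥ m/2 satisfies μ ≤ H λ^{−α} m^{β}. Then, with p = α + 1, q = p/(1−β) and γ = τ/p − n/q, there is a constant C = C(n,q) > 0 such that for every Borel set E ⊆ ℝ^n of finite measure and every λ ∈ (0,1]: |{x ∈ Ω : T 1_E(x) > λ}|^{1/q} ≤ C H^{1/p} δ^{−γ} λ^{−1} |E|^{1/p}. -/
open MeasureTheory Metric Set

noncomputable section

/-!
Every `x ∈ F = {T 1_E > λ}` has a set `A_{x,r} ⊆ B(x, C₀)` with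
`|A_{x,r} ∩ E| > λ |A_{x,r}| ≥ λ δ^τ`. Balls of a fixed radius around `δ`-separated points
overlap boundedly often, so `δ`-separated subsets of `F` have `O(|E| / (λ δ^τ))` points; hence a
finite maximal `δ`-separated sequence `x_1, …, x_m` in `F` exists, and `|F| ≤ m (2δ)ⁿ`.
For the least admissible `μ`, at least `m/2` of the sets `A_j ∩ E` keep measure `≥ (λ/2) δ^τ`
where the multiplicity is `≤ μ`; these pieces lie in `E` and overlap at most `μ` times, so
`(m/2)(λ/2) δ^τ ≤ μ |E| ≤ H λ^{-α} m^β |E|`. Solving for `m^{1-β}` and inserting into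
`|F| ≤ m (2δ)ⁿ` gives the bound with `C = 2^{n/q} 4^{1/p}`.
-/

open scoped ENNReal

section Overlap

variable {X ι : Type*}

-- the multiplicity function `Υ` of the paper, for `B i = A_i ∩ E`
def overlapCount (B : ι → Set X) (y : X) : ℕ := {i | y ∈ B i}.ncard

theorem overlapCount_eq_card_filter [Fintype ι] (B : ι → Set X) (y : X)
    [DecidablePred (y ∈ B ·)] :
    overlapCount B y = (Finset.univ.filter (y ∈ B ·)).card := by
  rw [overlapCount, ← Set.ncard_coe_finset, Finset.coe_filter]
  simp

theorem overlapCount_le_card [Fintype ι] (B : ι → Set X) (y : X) :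
    overlapCount B y ≤ Fintype.card ι :=
  (Set.ncard_le_ncard (subset_univ _)).trans_eq (by simp)

variable [MeasurableSpace X] [Fintype ι]

theorem measurable_overlapCount {B : ι → Set X} (hB : ∀ i, MeasurableSet (B i)) :
    Measurable (overlapCount B) := by
  classical
  simp_rw [funext fun y => overlapCount_eq_card_filter B y, Finset.card_filter]
  exact Finset.measurable_sum _ fun i _ => Measurable.ite (hB i) measurable_const measurable_const

theorem sum_measure_le_mul_of_overlapCount_le (ν : Measure X) {B : ι → Set X}
    (hB : ∀ i, MeasurableSet (B i)) {c : ℕ} (hc : ∀ y, overlapCount B y ≤ c) :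
    ∑ i, ν (B i) ≤ c * ν univ := by
  classical
  calc ∑ i, ν (B i) = ∫⁻ y, ∑ i, (B i).indicator 1 y ∂ν := by
        rw [lintegral_finsetSum _ fun i _ => measurable_one.indicator (hB i)]
        simp_rw [lintegral_indicator_one (hB _)]
    _ ≤ ∫⁻ _, (c : ℝ≥0∞) ∂ν := by
        refine lintegral_mono fun y => ?_
        simp only [indicator_apply, Pi.one_apply, Finset.sum_boole, ← overlapCount_eq_card_filter]
        exact_mod_cast hc y
    _ = c * ν univ := lintegral_const _

end Overlap

section Separated

variable {X : Type*} [PseudoMetricSpace X]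

def IsMaximalSeparated (δ : ℝ) (F : Set X) {m : ℕ} (xs : Fin m → X) : Prop :=
  (∀ j, xs j ∈ F) ∧ (∀ j j', j ≠ j' → δ ≤ dist (xs j) (xs j')) ∧
    ∀ y ∈ F, ∃ j, dist y (xs j) < δ

theorem exists_isMaximalSeparated_of_card_le {δ : ℝ} (hδ : 0 < δ) {F : Set X} {M : ℕ}
    (hM : ∀ s : Finset X, ↑s ⊆ F → (s : Set X).Pairwise (δ ≤ dist · ·) → s.card ≤ M) :
    ∃ m, ∃ xs : Fin m → X, IsMaximalSeparated δ F xs := by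
  classical
  let P (s : Finset X) : Prop := ↑s ⊆ F ∧ (s : Set X).Pairwise (δ ≤ dist · ·)
  obtain ⟨s, hs, hmax⟩ : ∃ s, P s ∧ ∀ t, P t → t.card ≤ s.card := by
    have hne : {k | ∃ s, P s ∧ s.card = k}.Nonempty := ⟨0, ∅, by simp [P]⟩
    have hbdd : BddAbove {k | ∃ s, P s ∧ s.card = k} :=
      ⟨M, by rintro _ ⟨s, hs, rfl⟩; exact hM s hs.1 hs.2⟩
    obtain ⟨s, hs, hcard⟩ := Nat.sSup_mem hne hbdd
    exact ⟨s, hs, fun t ht => hcard ▸ le_csSup hbdd ⟨t, ht, rfl⟩⟩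
  have hcover : ∀ y ∈ F, ∃ x ∈ s, dist y x < δ := by
    intro y hy
    by_contra! hfar
    have hys : y ∉ s := fun h => (hfar y h).not_gt (by simpa using hδ)
    have hPins : P (insert y s) := by
      refine ⟨by simpa [insert_subset_iff] using ⟨hy, hs.1⟩, ?_⟩
      rw [Finset.coe_insert]
      exact hs.2.insert fun x hx _ => ⟨hfar x hx, dist_comm x y ▸ hfar x hx⟩
    have := hmax _ hPins
    rw [Finset.card_insert_of_notMem hys] at this
    omega
  refine ⟨s.card, fun j => s.equivFin.symm j, fun j => hs.1 (s.equivFin.symm j).2,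
    fun j j' hne => hs.2 (s.equivFin.symm j).2 (s.equivFin.symm j').2 ?_, fun y hy => ?_⟩
  · simpa [Subtype.val_inj] using hne
  · obtain ⟨x, hx, hyx⟩ := hcover y hy
    exact ⟨s.equivFin ⟨x, hx⟩, by simpa using hyx⟩

end Separated

section Packing

variable {n : ℕ}

theorem ncard_le_of_pairwise_le_dist {δ R : ℝ} (hδ : 0 < δ) (hR : 0 ≤ R)
    {t : Set (Fin n → ℝ)} {y : Fin n → ℝ} (ht : t.Pairwise (δ ≤ dist · ·))
    (hty : t ⊆ closedBall y R) :
    (t.ncard : ℝ) ≤ ((2 * R + δ) / δ) ^ n := by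
  rcases t.finite_or_infinite with hfin | hinf
  swap
  · rw [hinf.ncard, Nat.cast_zero]; positivity
  lift t to Finset (Fin n → ℝ) using hfin
  have hdisj : (t : Set (Fin n → ℝ)).PairwiseDisjoint (ball · (δ / 2)) :=
    fun x hx x' hx' hne => ball_disjoint_ball (by linarith [ht hx hx' hne])
  have hvol : volume (⋃ x ∈ t, ball x (δ / 2)) ≤ volume (ball y (R + δ / 2)) := by
    refine measure_mono (iUnion₂_subset fun x hx => ball_subset_ball' ?_)
    linarith [mem_closedBall.1 (hty hx)]
  rw [measure_biUnion_finset hdisj fun _ _ => measurableSet_ball,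
    Finset.sum_congr rfl fun x _ => Real.volume_pi_ball x (by positivity),
    Real.volume_pi_ball y (by positivity), Finset.sum_const, nsmul_eq_mul, Fintype.card_fin,
    ← ENNReal.ofReal_natCast, ← ENNReal.ofReal_mul (by positivity),
    ENNReal.ofReal_le_ofReal_iff (by positivity)] at hvol
  rw [mul_div_cancel₀ δ two_ne_zero, mul_add, mul_div_cancel₀ δ two_ne_zero] at hvol
  rwa [Set.ncard_coe_finset, div_pow, le_div_iff₀ (by positivity)]

theorem volume_le_of_forall_exists_dist_lt {δ : ℝ} (hδ : 0 < δ) {F : Set (Fin n → ℝ)} {m : ℕ}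
    {xs : Fin m → Fin n → ℝ} (hcover : ∀ y ∈ F, ∃ j, dist y (xs j) < δ) :
    volume F ≤ m * ENNReal.ofReal ((2 * δ) ^ n) :=
  calc volume F ≤ volume (⋃ j, ball (xs j) δ) :=
        measure_mono fun y hy => mem_iUnion.2 (hcover y hy)
    _ ≤ ∑ j, volume (ball (xs j) δ) := measure_iUnion_fintype_le _ _
    _ = m * ENNReal.ofReal ((2 * δ) ^ n) := by simp [Real.volume_pi_ball _ hδ]

theorem card_mul_le_of_le_measure_inter_closedBall {δ R : ℝ} (hδ : 0 < δ) (hR : 0 ≤ R)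
    {E F : Set (Fin n → ℝ)} {b : ℝ≥0∞} (hb : ∀ x ∈ F, b ≤ volume (E ∩ closedBall x R))
    {s : Finset (Fin n → ℝ)} (hsF : ↑s ⊆ F)
    (hs : (s : Set (Fin n → ℝ)).Pairwise (δ ≤ dist · ·)) :
    s.card * b ≤ ⌊((2 * R + δ) / δ) ^ n⌋₊ * volume E := by
  have hoverlap : ∀ y, overlapCount (fun x : s => closedBall (x : Fin n → ℝ) R) y ≤
      ⌊((2 * R + δ) / δ) ^ n⌋₊ := by
    intro y
    have hcount : overlapCount (fun x : s => closedBall (x : Fin n → ℝ) R) y =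
        {x ∈ (s : Set (Fin n → ℝ)) | y ∈ closedBall x R}.ncard := by
      rw [overlapCount, ← ncard_image_of_injective _ Subtype.val_injective]
      congr 1
      ext x
      simp [and_comm]
    rw [hcount]
    refine Nat.le_floor (ncard_le_of_pairwise_le_dist hδ hR (y := y) (hs.mono fun x hx => hx.1) ?_)
    intro x hx
    rw [mem_closedBall, dist_comm]
    exact hx.2
  calc s.card * b = ∑ x : s, b := by simp
    _ ≤ ∑ x : s, volume.restrict E (closedBall (x : Fin n → ℝ) R) := by
        gcongr with x
        rw [Measure.restrict_apply measurableSet_closedBall, inter_comm]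
        exact hb x (hsF x.2)
    _ ≤ _ := by
        simpa using sum_measure_le_mul_of_overlapCount_le (volume.restrict E)
          (fun x : s => measurableSet_closedBall) hoverlap

theorem exists_isMaximalSeparated_of_le_measure_inter_closedBall {δ R : ℝ} (hδ : 0 < δ)
    (hR : 0 ≤ R)
    {E F : Set (Fin n → ℝ)} (hE : volume E ≠ ⊤) {b : ℝ≥0∞} (hb0 : b ≠ 0)
    (hb : ∀ x ∈ F, b ≤ volume (E ∩ closedBall x R)) :
    ∃ m, ∃ xs : Fin m → Fin n → ℝ, IsMaximalSeparated δ F xs := by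
  set N := ⌊((2 * R + δ) / δ) ^ n⌋₊
  have hNE : N * volume E ≠ ⊤ := ENNReal.mul_ne_top (by simp) hE
  refine exists_isMaximalSeparated_of_card_le hδ (M := ⌊(N * volume E / b).toReal⌋₊)
    fun s hsF hs => ?_
  have h := card_mul_le_of_le_measure_inter_closedBall hδ hR hb hsF hs
  rw [← ENNReal.le_div_iff_mul_le (.inl hb0) (.inr hNE)] at h
  exact Nat.le_floor (by simpa using ENNReal.toReal_mono (ENNReal.div_ne_top hNE hb0) h)

end Packing

theorem ofReal_mul_lt_measure_inter_of_lt_setAverage {X : Type*} [MeasurableSpace X]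
    {ν : Measure X} {A E : Set X} (hE : MeasurableSet E) {lam : ℝ} (hlam : 0 ≤ lam)
    (h : lam < ⨍ y in A, |E.indicator (fun _ => (1 : ℝ)) y| ∂ν) :
    ENNReal.ofReal lam * ν A < ν (A ∩ E) := by
  have havg : ⨍ y in A, |E.indicator (fun _ => (1 : ℝ)) y| ∂ν = ν.real (A ∩ E) / ν.real A := by
    simp_rw [abs_of_nonneg (indicator_nonneg (fun _ _ => zero_le_one) _)]
    rw [setAverage_eq, setIntegral_indicator hE, setIntegral_const, smul_eq_mul, smul_eq_mul,
      mul_one, inv_mul_eq_div]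
  rw [havg] at h
  have hA : 0 < ν.real A := by
    by_contra! hA
    rw [le_antisymm hA measureReal_nonneg, div_zero] at h
    exact h.not_ge hlam
  have hAfin : ν A ≠ ⊤ := fun htop => hA.ne' (by simp [Measure.real, htop])
  rw [lt_div_iff₀ hA] at h
  calc ENNReal.ofReal lam * ν A = ENNReal.ofReal (lam * ν.real A) := by
        rw [ENNReal.ofReal_mul hlam, ofReal_measureReal hAfin]
    _ < ENNReal.ofReal (ν.real (A ∩ E)) :=
        (ENNReal.ofReal_lt_ofReal_iff_of_nonneg (by positivity)).2 h
    _ = ν (A ∩ E) := ofReal_measureReal (measure_ne_top_of_subset inter_subset_left hAfin)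

theorem exists_ofReal_mul_lt_measure_inter_of_lt_absMax {n : ℕ} {I : Type*}
    {A : (Fin n → ℝ) → I → Set (Fin n → ℝ)} {E : Set (Fin n → ℝ)} (hE : MeasurableSet E)
    {lam : ℝ} (hlam : 0 ≤ lam) {x : Fin n → ℝ}
    (h : lam < absMax A (E.indicator fun _ => (1 : ℝ)) x) :
    ∃ r, ENNReal.ofReal lam * volume (A x r) < volume (A x r ∩ E) := by
  obtain ⟨r, hr⟩ : ∃ r, lam < ⨍ y in A x r, |E.indicator (fun _ => (1 : ℝ)) y| := by
    by_contra! hle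
    exact h.not_ge (Real.iSup_le hle hlam)
  exact ⟨r, ofReal_mul_lt_measure_inter_of_lt_setAverage hE hlam hr⟩

theorem subset_closedBall_of_ediam_le {X : Type*} [PseudoMetricSpace X] {x : X} {S : Set X}
    {C : ℝ} (h : ediam ({x} ∪ S) ≤ ENNReal.ofReal C) : S ⊆ closedBall x (max C 0) := by
  intro y hy
  have hyx := (edist_le_ediam_of_mem (mem_union_right _ hy)
    (mem_union_left _ (mem_singleton x))).trans h
  rw [edist_dist, ENNReal.ofReal_le_ofReal_iff'] at hyx
  rw [mem_closedBall]
  rcases hyx with hyx | hyx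
  · exact hyx.trans (le_max_left _ _)
  · exact hyx.trans (le_max_right _ _)

section GoodCount

variable {n m : ℕ} {B : Fin m → Set (Fin n → ℝ)} {E : Set (Fin n → ℝ)} {lam : ℝ}

theorem goodCount_of_le_measure_inter (hlam : 0 ≤ lam)
    (hB : ∀ j, ENNReal.ofReal lam * volume (B j) ≤ volume (B j ∩ E)) :
    goodCount B E lam m := by
  have hall : ∀ j, ENNReal.ofReal (lam / 2) * volume (B j) ≤
      volume {y ∈ B j ∩ E | ({i : Fin m | y ∈ B i ∩ E}).ncard ≤ m} := by
    intro j
    have hfull : {y ∈ B j ∩ E | ({i : Fin m | y ∈ B i ∩ E}).ncard ≤ m} = B j ∩ E :=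
      sep_eq_self_iff_mem_true.2 fun y _ =>
        (overlapCount_le_card (fun i => B i ∩ E) y).trans_eq (Fintype.card_fin m)
    rw [hfull]
    refine le_trans ?_ (hB j)
    gcongr
    linarith
  simp only [goodCount, hall, ofPred_true, ncard_univ, Nat.card_eq_fintype_card,
    Fintype.card_fin]
  linarith [(Nat.cast_nonneg m : (0 : ℝ) ≤ m)]

theorem goodCount.ofReal_mul_le {μ : ℕ} (h : goodCount B E lam μ)
    (hB : ∀ j, MeasurableSet (B j)) (hE : MeasurableSet E) {b : ℝ≥0∞} (hb : ∀ j, b ≤ volume (B j)) :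
    ENNReal.ofReal (m / 2 * (lam / 2)) * b ≤ μ * volume E := by
  classical
  -- the low-multiplicity parts of `B j ∩ E` measured in `goodCount`
  set G : Fin m → Set (Fin n → ℝ) :=
    fun j => {y ∈ B j ∩ E | overlapCount (fun i => B i ∩ E) y ≤ μ}
  have hG : ∀ j, MeasurableSet (G j) := fun j => ((hB j).inter hE).inter
    (measurable_overlapCount (fun i => (hB i).inter hE) measurableSet_Iic)
  have hGoverlap : ∀ y, overlapCount G y ≤ μ := by
    intro y
    rcases eq_empty_or_nonempty {i | y ∈ G i} with hy | ⟨j, hj⟩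
    · simp [overlapCount, hy]
    · exact (ncard_le_ncard fun i hi => hi.1).trans hj.2
  set good := {j | ENNReal.ofReal (lam / 2) * volume (B j) ≤ volume (G j)}
  calc ENNReal.ofReal (m / 2 * (lam / 2)) * b
      ≤ good.ncard * (ENNReal.ofReal (lam / 2) * b) := by
        rw [ENNReal.ofReal_mul (by positivity), mul_assoc, ← ENNReal.ofReal_natCast]
        gcongr
        exact h
    _ = ∑ j ∈ good.toFinset, ENNReal.ofReal (lam / 2) * b := by
        rw [Finset.sum_const, nsmul_eq_mul, ncard_eq_toFinset_card']
    _ ≤ ∑ j ∈ good.toFinset, volume (G j) := by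
        gcongr with j hj
        have hj : j ∈ good := mem_toFinset.1 hj
        calc ENNReal.ofReal (lam / 2) * b ≤ ENNReal.ofReal (lam / 2) * volume (B j) := by
              gcongr; exact hb j
          _ ≤ volume (G j) := hj
    _ ≤ ∑ j, volume.restrict E (G j) := by
        refine (Finset.sum_le_sum_of_subset (Finset.subset_univ _)).trans_eq ?_
        exact Finset.sum_congr rfl fun j _ =>
          (Measure.restrict_eq_self _ fun y hy => hy.1.2).symm
    _ ≤ μ * volume E := by
        simpa using sum_measure_le_mul_of_overlapCount_le (volume.restrict E) hG hGoverlap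

end GoodCount

theorem rpow_one_sub_mul_le {m lam d H e α β : ℝ} (hm : 0 < m) (hlam : 0 < lam)
    (h : m / 2 * (lam / 2) * d ≤ H * lam ^ (-α) * m ^ β * e) :
    m ^ (1 - β) * lam ^ (α + 1) * d ≤ 4 * H * e := by
  have ha : 0 < lam ^ α := Real.rpow_pos_of_pos hlam α
  have hc : 0 < m ^ β := Real.rpow_pos_of_pos hm β
  rw [Real.rpow_neg hlam.le] at h
  rw [Real.rpow_sub hm, Real.rpow_one, Real.rpow_add_one hlam.ne', div_mul_eq_mul_div,
    div_mul_eq_mul_div, div_le_iff₀ hc]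
  have := mul_le_mul_of_nonneg_left h (by positivity : 0 ≤ 4 * lam ^ α)
  rw [show 4 * lam ^ α * (H * (lam ^ α)⁻¹ * m ^ β * e) = 4 * H * e * m ^ β by
    field_simp] at this
  linarith

theorem rpow_mul_le_of_rpow_le {m lam d c τ p s : ℝ} (hm : 0 ≤ m) (hlam : 0 < lam)
    (hd : 0 < d) (hc : 0 ≤ c) (hp : 0 < p) (h : m ^ (s * p) * lam ^ p * d ^ τ ≤ c) :
    m ^ s ≤ c ^ (1 / p) * d ^ (-(τ / p)) / lam := by
  have hX : m ^ s * lam * d ^ (τ / p) ≤ c ^ p⁻¹ := by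
    rw [Real.le_rpow_inv_iff_of_pos (by positivity) hc hp, Real.mul_rpow (by positivity)
      (by positivity), Real.mul_rpow (by positivity) hlam.le, ← Real.rpow_mul hm,
      ← Real.rpow_mul hd.le, div_mul_cancel₀ τ hp.ne']
    exact h
  rw [Real.rpow_neg hd.le, one_div, le_div_iff₀ hlam, ← div_eq_mul_inv,
    le_div_iff₀ (by positivity)]
  linarith

theorem rpow_le_of_count_le {n m μ : ℕ} {V W : ℝ≥0∞} {δ τ α β H lam : ℝ} (hδ : 0 < δ)
    (hlam : 0 < lam) (hα : 0 ≤ α) (hβ : β < 1) (hH : 0 < H) (hW : W ≠ ⊤)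
    (hV : V ≤ m * ENNReal.ofReal ((2 * δ) ^ n))
    (hcount : ENNReal.ofReal (m / 2 * (lam / 2)) * ENNReal.ofReal (δ ^ τ) ≤ μ * W)
    (hμ : (μ : ℝ) ≤ H * lam ^ (-α) * m ^ β) :
    V ^ ((1 - β) / (α + 1)) ≤
      ENNReal.ofReal (2 ^ ((n : ℝ) * (1 - β) / (α + 1)) * 4 ^ (1 / (α + 1)) *
          H ^ (1 / (α + 1)) * δ ^ (-(τ / (α + 1) - (n : ℝ) * (1 - β) / (α + 1))) / lam) *
        W ^ (1 / (α + 1)) := by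
  have hp : 0 < α + 1 := by linarith
  have hs : 0 < (1 - β) / (α + 1) := div_pos (by linarith) hp
  rcases m.eq_zero_or_pos with rfl | hm
  · simp_all [ENNReal.zero_rpow_of_pos hs]
  obtain ⟨e, he, rfl⟩ : ∃ e, 0 ≤ e ∧ W = ENNReal.ofReal e :=
    ⟨W.toReal, ENNReal.toReal_nonneg, (ENNReal.ofReal_toReal hW).symm⟩
  have hkey : (m : ℝ) / 2 * (lam / 2) * δ ^ τ ≤ μ * e := by
    rwa [← ENNReal.ofReal_natCast, ← ENNReal.ofReal_mul (by positivity),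
      ← ENNReal.ofReal_mul (by positivity), ENNReal.ofReal_le_ofReal_iff (by positivity)]
      at hcount
  have hpow := rpow_one_sub_mul_le (by positivity) hlam
    (hkey.trans (mul_le_mul_of_nonneg_right hμ he))
  rw [← div_mul_cancel₀ (1 - β) hp.ne'] at hpow
  have hmpow := rpow_mul_le_of_rpow_le (Nat.cast_nonneg m) hlam hδ (by positivity) hp hpow
  have hreal : ((m : ℝ) * (2 * δ) ^ n) ^ ((1 - β) / (α + 1)) ≤
      2 ^ ((n : ℝ) * (1 - β) / (α + 1)) * 4 ^ (1 / (α + 1)) * H ^ (1 / (α + 1)) *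
        δ ^ (-(τ / (α + 1) - (n : ℝ) * (1 - β) / (α + 1))) / lam * e ^ (1 / (α + 1)) := by
    rw [Real.mul_rpow (by positivity) (by positivity), ← Real.rpow_natCast, ← Real.rpow_mul
      (by positivity), ← mul_div_assoc, Real.mul_rpow zero_le_two hδ.le]
    calc _ ≤ (4 * H * e) ^ (1 / (α + 1)) * δ ^ (-(τ / (α + 1))) / lam *
          (2 ^ ((n : ℝ) * (1 - β) / (α + 1)) * δ ^ ((n : ℝ) * (1 - β) / (α + 1))) := by
          gcongr
      _ = _ := by
          rw [Real.mul_rpow (by positivity) he, Real.mul_rpow zero_le_four hH.le, neg_sub,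
            Real.rpow_sub hδ, Real.rpow_neg hδ.le]
          field_simp
  calc V ^ ((1 - β) / (α + 1))
      ≤ ENNReal.ofReal ((m : ℝ) * (2 * δ) ^ n) ^ ((1 - β) / (α + 1)) := by
        rw [ENNReal.ofReal_mul (Nat.cast_nonneg m), ENNReal.ofReal_natCast]
        gcongr
    _ ≤ _ := by
        rw [ENNReal.ofReal_rpow_of_nonneg (by positivity) hs.le,
          ENNReal.ofReal_rpow_of_nonneg he (by positivity), ← ENNReal.ofReal_mul (by positivity)]
        exact ENNReal.ofReal_le_ofReal hreal

theorem abstract_restricted_weak_type_general (n : ℕ) (τ : ℝ)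
    (δ : ℝ) (hδ : δ ∈ Set.Ioo (0 : ℝ) 1) (α β H : ℝ)
    (hα : 0 ≤ α) (hβ : β < 1) (hH : 0 < H)
    (Ω : Set (Fin n → ℝ)) (I : Type)
    (A : (Fin n → ℝ) → I → Set (Fin n → ℝ))
    (hAmeas : ∀ x r, MeasurableSet (A x r))
    (hAlow : ∀ x ∈ Ω, ∀ r, ENNReal.ofReal (δ ^ τ) ≤ volume (A x r))
    (C0 : ℝ)
    (hdiam : ∀ x ∈ Ω, EMetric.diam ({x} ∪ ⋃ r : I, A x r) ≤ ENNReal.ofReal C0)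
    (hyp : ∀ E : Set (Fin n → ℝ), MeasurableSet E → volume E < ⊤ →
      ∀ lam ∈ Set.Ioc (0 : ℝ) 1, ∀ (m : ℕ) (xs : Fin m → Fin n → ℝ),
        (∀ j, xs j ∈ {x ∈ Ω | lam < absMax A (E.indicator fun _ => (1 : ℝ)) x}) →
        (∀ j j', j ≠ j' → δ ≤ dist (xs j) (xs j')) →
        (∀ y ∈ {x ∈ Ω | lam < absMax A (E.indicator fun _ => (1 : ℝ)) x},
          ∃ j, dist y (xs j) < δ) →
        ∀ rs : Fin m → I,
          (∀ j, ENNReal.ofReal lam * volume (A (xs j) (rs j)) <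
            volume (A (xs j) (rs j) ∩ E)) →
        ∀ μ : ℕ, goodCount (fun j => A (xs j) (rs j)) E lam μ →
          (∀ ν : ℕ, ν < μ → ¬ goodCount (fun j => A (xs j) (rs j)) E lam ν) →
          (μ : ℝ) ≤ H * lam ^ (-α) * (m : ℝ) ^ β) :
    ∃ C > 0, ∀ E : Set (Fin n → ℝ), MeasurableSet E → volume E < ⊤ →
      ∀ lam ∈ Set.Ioc (0 : ℝ) 1,
        volume {x ∈ Ω | lam < absMax A (E.indicator fun _ => (1 : ℝ)) x} ^
            ((1 - β) / (α + 1)) ≤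
          ENNReal.ofReal (C * H ^ (1 / (α + 1)) *
              δ ^ (-(τ / (α + 1) - (n : ℝ) * (1 - β) / (α + 1))) / lam) *
            volume E ^ (1 / (α + 1)) := by
  classical
  refine ⟨2 ^ ((n : ℝ) * (1 - β) / (α + 1)) * 4 ^ (1 / (α + 1)), by positivity,
    fun E hE hEfin lam hlam => ?_⟩
  set F := {x ∈ Ω | lam < absMax A (E.indicator fun _ => (1 : ℝ)) x}
  choose rad hrad using fun x (hx : x ∈ F) =>
    exists_ofReal_mul_lt_measure_inter_of_lt_absMax hE hlam.1.le hx.2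
  have hmass : ∀ x ∈ F, ENNReal.ofReal (lam * δ ^ τ) ≤ volume (E ∩ closedBall x (max C0 0)) :=
    fun x hx => calc
      ENNReal.ofReal (lam * δ ^ τ) ≤ ENNReal.ofReal lam * volume (A x (rad x hx)) := by
        rw [ENNReal.ofReal_mul hlam.1.le]; gcongr; exact hAlow x hx.1 _
      _ ≤ volume (A x (rad x hx) ∩ E) := (hrad x hx).le
      _ ≤ volume (E ∩ closedBall x (max C0 0)) := by
        rw [inter_comm]
        exact measure_mono (inter_subset_inter_right _
          ((subset_iUnion _ _).trans (subset_closedBall_of_ediam_le (hdiam x hx.1))))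
  obtain ⟨m, xs, hxsF, hxs_sep, hxs_cover⟩ :=
    exists_isMaximalSeparated_of_le_measure_inter_closedBall hδ.1 (le_max_right C0 0) hEfin.ne
      (by simpa using mul_pos hlam.1 (Real.rpow_pos_of_pos hδ.1 τ)) hmass
  have hdense : ∀ j, ENNReal.ofReal lam * volume (A (xs j) (rad (xs j) (hxsF j))) <
      volume (A (xs j) (rad (xs j) (hxsF j)) ∩ E) := fun j => hrad _ _
  have hgood : ∃ μ, goodCount (fun j => A (xs j) (rad (xs j) (hxsF j))) E lam μ :=
    ⟨m, goodCount_of_le_measure_inter hlam.1.le fun j => (hdense j).le⟩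
  exact rpow_le_of_count_le hδ.1 hlam.1 hα hβ hH hEfin.ne
    (volume_le_of_forall_exists_dist_lt hδ.1 hxs_cover)
    ((Nat.find_spec hgood).ofReal_mul_le (fun _ => hAmeas _ _) hE fun j => hAlow _ (hxsF j).1 _)
    (hyp E hE hEfin lam hlam m xs hxsF hxs_sep hxs_cover _ hdense _ (Nat.find_spec hgood)
      fun _ => Nat.find_min hgood)

/-- abstract combinatorial bootstrapping lemma, Lemma 3.1.
Under the stated hypotheses on the family `{A_{x,r}}` (measure bounded below by `δ^τ`,
uniformly bounded diameter) and assuming the multiplicity bound `μ ≤ H λ^{-α} m^β` for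
the least admissible `μ` arising from any maximal `δ`-separated family in the superlevel
set `F = {T 1_E > λ}`, the operator `T` satisfies the restricted weak-type `(p,q)` bound
`|{T 1_E > λ}|^{1/q} ≤ C H^{1/p} δ^{-γ} λ^{-1} |E|^{1/p}` with `p = α+1`, `q = p/(1-β)`,
`γ = τ/p - n/q`. -/
theorem abstract_restricted_weak_type (n : ℕ) (hn : 1 ≤ n) (τ : ℝ)
    (δ : ℝ) (hδ : δ ∈ Set.Ioo (0 : ℝ) 1) (α β H : ℝ)
    (hα : 0 ≤ α) (hβ : β < 1) (hH : 0 < H)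
    (Ω : Set (Fin n → ℝ)) (hΩ : MeasurableSet Ω) (I : Type) (hI : Nonempty I)
    (A : (Fin n → ℝ) → I → Set (Fin n → ℝ))
    (hAmeas : ∀ x r, MeasurableSet (A x r))
    (hApos : ∀ x ∈ Ω, ∀ r, 0 < volume (A x r))
    (hAfin : ∀ x ∈ Ω, ∀ r, volume (A x r) < ⊤)
    (hAlow : ∀ x ∈ Ω, ∀ r, ENNReal.ofReal (δ ^ τ) ≤ volume (A x r))
    (C0 : ℝ)
    (hdiam : ∀ x ∈ Ω, EMetric.diam ({x} ∪ ⋃ r : I, A x r) ≤ ENNReal.ofReal C0)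
    (hyp : ∀ E : Set (Fin n → ℝ), MeasurableSet E → volume E < ⊤ →
      ∀ lam ∈ Set.Ioc (0 : ℝ) 1, ∀ (m : ℕ) (xs : Fin m → Fin n → ℝ),
        (∀ j, xs j ∈ {x ∈ Ω | lam < absMax A (E.indicator fun _ => (1 : ℝ)) x}) →
        (∀ j j', j ≠ j' → δ ≤ dist (xs j) (xs j')) →
        (∀ y ∈ {x ∈ Ω | lam < absMax A (E.indicator fun _ => (1 : ℝ)) x},
          ∃ j, dist y (xs j) < δ) →
        ∀ rs : Fin m → I,
          (∀ j, ENNReal.ofReal lam * volume (A (xs j) (rs j)) <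
            volume (A (xs j) (rs j) ∩ E)) →
        ∀ μ : ℕ, goodCount (fun j => A (xs j) (rs j)) E lam μ →
          (∀ ν : ℕ, ν < μ → ¬ goodCount (fun j => A (xs j) (rs j)) E lam ν) →
          (μ : ℝ) ≤ H * lam ^ (-α) * (m : ℝ) ^ β) :
    ∃ C > 0, ∀ E : Set (Fin n → ℝ), MeasurableSet E → volume E < ⊤ →
      ∀ lam ∈ Set.Ioc (0 : ℝ) 1,
        volume {x ∈ Ω | lam < absMax A (E.indicator fun _ => (1 : ℝ)) x} ^
            ((1 - β) / (α + 1)) ≤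
          ENNReal.ofReal (C * H ^ (1 / (α + 1)) *
              δ ^ (-(τ / (α + 1) - (n : ℝ) * (1 - β) / (α + 1))) / lam) *
            volume E ^ (1 / (α + 1)) :=
  abstract_restricted_weak_type_general n τ δ hδ α β H hα hβ hH Ω I A hAmeas hAlow C0 hdiam hyp
end
end

section
/- Let n ≥ 2 and 0 ≤ k < n be integers, q* = 2n²/((n−k)(2n−1)), and 1 < q ≤ q*. Let δ ∈ (0,1) with 1/δ ∈ ℕ, and let M̃^k_{ρ,δ} be a linearized k-skeleton maximal operator built from some ρ : {x_1,…,x_u} → [1,2] ∩ δℤ and a face selection (ℓ^i)_{i=1}^u with the following overlap property for some constant C_0 = C_0(n,k): for every coordinate k-plane π, every subset J ⊆ {1,…,u} such that ℓ^i is parallel to π for all i ∈ J, and every affine translate V of π, #{ i ∈ J : ℓ^i ⊆ V } ≤ C_0 |J|^{1 − (n−k)(2n−1)/(2n²)}. Then there exists C = C(k,n,q) > 0 such that for every f ∈ L¹(ℝ^n) supported in 7Q_0 and every λ > 0: λ · |{x ∈ Q_0 : M̃^k_{ρ,δ} f(x) > λ}|^{1/q} ≤ C · δ^{(k−n)/(2n)}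 · ‖f‖_{L¹}. -/
open MeasureTheory Metric Set

noncomputable section

/-!
Call the grid cube `z` bad if `|f|` averages more than `λ` over the `δ`-neighborhood `A_z` of its
face. The level set is covered by the `N` bad cubes, so `|E| ≤ N δⁿ`. Each `A_z` has measure at
least `2ⁿ δ^{n-k}`, and no point lies in more than `C(n,k)` of them: the faces near a point lie
in boundedly many affine `k`-planes, and by the overlap property each plane contains boundedly
many faces. Hence `N λ 2ⁿ δ^{n-k} ≤ C ‖f‖₁`. This gives `λ |E| ≤ C ‖f‖₁ δᵏ` and, when `E` is not
null, `λ ≤ C ‖f‖₁ δ^{k-n}`; interpolating with weights `1/q` and `1 - 1/q` yields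
`λ |E|^{1/q} ≤ C ‖f‖₁ δ^{n/q - (n-k)}`, and `q ≤ q*` says exactly `n/q - (n-k) ≥ (k-n)/(2n)`.
-/

open scoped ENNReal

def criticalExponent (n k : ℕ) : ℝ := 2 * (n : ℝ) ^ 2 / (((n : ℝ) - k) * (2 * (n : ℝ) - 1))

lemma criticalExponent_pos {n k : ℕ} (hk : k < n) : 0 < criticalExponent n k := by
  have hkn : (k : ℝ) + 1 ≤ n := by exact_mod_cast hk
  unfold criticalExponent
  apply div_pos <;> nlinarith

section Faces

variable {n : ℕ}

def faceAnchor (x : Fin n → ℝ) (r : ℝ) (S : Finset (Fin n)) (ε : Fin n → Bool) : Fin n → ℝ :=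
  fun j => if j ∈ S then x j + (if ε j then r else -r) else 0

lemma kFace_subset_planeTranslate (x : Fin n → ℝ) (r : ℝ) (S : Finset (Fin n))
    (ε : Fin n → Bool) : kFace x r S ε ⊆ planeTranslate Sᶜ (faceAnchor x r S ε) := by
  intro w hw j hj
  have hjS : j ∈ S := by simpa using hj
  rw [hw.1 j hjS, faceAnchor, if_pos hjS]

lemma abs_sub_le_of_mem_cthickening {E : Set (Fin n → ℝ)} {j : Fin n} {c δ : ℝ} (hδ : 0 ≤ δ)
    (hE : ∀ w ∈ E, w j = c) {y : Fin n → ℝ} (hy : y ∈ cthickening δ E) : |y j - c| ≤ δ := by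
  refine le_of_forall_gt fun η hη => ?_
  obtain ⟨w, hw, hyw⟩ :=
    mem_thickening_iff.mp (cthickening_subset_thickening' (hδ.trans_lt hη) hη E hy)
  calc |y j - c| = dist (y j) (w j) := by rw [hE w hw, Real.dist_eq]
    _ ≤ dist y w := dist_le_pi_dist y w j
    _ < η := hyw

lemma ofReal_le_volume_cthickening_kFace {x : Fin n → ℝ} {r δ : ℝ} (hδ : 0 ≤ δ) (hr : 1 ≤ r)
    (S : Finset (Fin n)) (ε : Fin n → Bool) :
    ENNReal.ofReal (2 ^ n * δ ^ S.card) ≤ volume (cthickening δ (kFace x r S ε)) := by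
  set c := faceAnchor x r S ε
  set B : Set (Fin n → ℝ) := univ.pi fun j =>
    if j ∈ S then Icc (c j - δ) (c j + δ) else Icc (x j - r) (x j + r)
  have hB : B ⊆ cthickening δ (kFace x r S ε) := by
    intro y hy
    have hyj (j : Fin n) := hy j (mem_univ j)
    refine mem_cthickening_of_dist_le y (fun j => if j ∈ S then c j else y j) δ _ ⟨?_, ?_⟩ ?_
    · intro j hj
      simp [c, faceAnchor, hj]
    · intro j hj
      have := hyj j
      simp only [hj, if_false, mem_Icc] at this ⊢
      exact abs_le.mpr ⟨by linarith, by linarith⟩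
    · refine (dist_pi_le_iff hδ).mpr fun j => ?_
      have := hyj j
      rw [Real.dist_eq]
      by_cases hj : j ∈ S
      · simp only [hj, if_true, mem_Icc] at this ⊢
        exact abs_le.mpr ⟨by linarith, by linarith⟩
      · simpa [hj] using hδ
  have hfactor (j : Fin n) : ENNReal.ofReal (2 * if j ∈ S then δ else 1) ≤
      volume (if j ∈ S then Icc (c j - δ) (c j + δ) else Icc (x j - r) (x j + r)) := by
    split_ifs <;> rw [Real.volume_Icc] <;> exact ENNReal.ofReal_le_ofReal (by linarith)
  calc ENNReal.ofReal (2 ^ n * δ ^ S.card)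
      = ∏ j, ENNReal.ofReal (2 * if j ∈ S then δ else 1) := by
        rw [← ENNReal.ofReal_prod_of_nonneg fun j _ => by positivity, Finset.prod_mul_distrib,
          Fintype.prod_ite_mem, Finset.prod_const, Finset.prod_const, Finset.card_univ,
          Fintype.card_fin]
    _ ≤ volume B := by
        rw [volume_pi_pi]
        exact Finset.prod_le_prod' fun j _ => hfactor j
    _ ≤ _ := measure_mono hB

end Faces

lemma mem_Icc_ceil_floor_of_abs_sub_le {δ y : ℝ} (hδ : 0 < δ) {s : ℤ}
    (h : |y - δ * (s + 1 / 2)| ≤ δ) : s ∈ Finset.Icc ⌈y / δ - 3 / 2⌉ ⌊y / δ - 3 / 2 + 2⌋ := by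
  obtain ⟨h₁, h₂⟩ := abs_le.mp h
  have hlow : s - 1 / 2 ≤ y / δ := by rw [le_div_iff₀ hδ]; linarith
  have hupp : y / δ ≤ s + 3 / 2 := by rw [div_le_iff₀ hδ]; linarith
  rw [Finset.mem_Icc, Int.ceil_le, Int.le_floor]
  constructor <;> linarith

lemma card_Icc_ceil_floor_add_two_le (a : ℝ) : (Finset.Icc ⌈a⌉ ⌊a + 2⌋).card ≤ 3 := by
  rw [Int.card_Icc, Int.floor_add_ofNat]
  have := Int.floor_le_ceil a
  omega

section Multiplicity

variable {n k m : ℕ} {δ : ℝ} {ρ : (Fin n → Fin m) → ℝ} {S : (Fin n → Fin m) → Finset (Fin n)}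
  {ε : (Fin n → Fin m) → Fin n → Bool} {C0 : ℝ}

/-- Applied to `J = T`, the overlap property reads `#T ≤ C₀ (#T)^{1 - 1/q*}`. -/
lemma card_le_of_overlapProp (hk : k < n) (hov : OverlapProp k δ ρ S ε C0)
    {π : Finset (Fin n)} (hπ : π.card = k) {v : Fin n → ℝ} {T : Finset (Fin n → Fin m)}
    (hT : ∀ z ∈ T, linFace δ ρ S ε z ⊆ planeTranslate π v) :
    T.card ≤ ⌈C0 ^ criticalExponent n k⌉₊ := by
  rcases T.eq_empty_or_nonempty with rfl | hTne
  · simp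
  set β := 1 / criticalExponent n k
  have hβ : 0 < β := one_div_pos.mpr (criticalExponent_pos hk)
  have hT0 : (0 : ℝ) < T.card := by exact_mod_cast hTne.card_pos
  have hov' := hov π hπ T (fun z hz => ⟨v, hT z hz⟩) v
  rw [Set.sep_eq_self_iff_mem_true.mpr hT, Set.ncard_coe_finset] at hov'
  have hpow : (T.card : ℝ) ^ β ≤ C0 := by
    have hexp : ((n : ℝ) - k) * (2 * n - 1) / (2 * n ^ 2) = β := by
      simp only [β, criticalExponent, one_div, inv_div]
    have hsplit : (T.card : ℝ) ^ β * (T.card : ℝ) ^ (1 - β) = T.card := by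
      rw [← Real.rpow_add hT0, add_sub_cancel, Real.rpow_one]
    rw [hexp] at hov'
    exact le_of_mul_le_mul_right (hsplit.trans_le hov') (by positivity)
  suffices (T.card : ℝ) ≤ ⌈C0 ^ criticalExponent n k⌉₊ by exact_mod_cast this
  calc (T.card : ℝ) = ((T.card : ℝ) ^ β) ^ (1 / β) := by
        rw [← Real.rpow_mul hT0.le, mul_one_div_cancel hβ.ne', Real.rpow_one]
    _ ≤ C0 ^ criticalExponent n k := by
        rw [one_div_one_div]
        exact Real.rpow_le_rpow (by positivity) hpow (criticalExponent_pos hk).le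
    _ ≤ _ := Nat.le_ceil _

open scoped Classical in
/-- The faces whose `δ`-neighborhood contains `y` are sorted by the affine `k`-plane containing
them: by `card_le_of_overlapProp` each class has at most `⌈C₀^{q*}⌉` members, and since the
fixed coordinates lie in `δ(ℤ + 1/2)` within distance `δ` of `y`, there are at most `2ⁿ · 4ⁿ`
classes. -/
lemma card_filter_mem_cthickening_linFace_le (hk : k < n) (hδ : 0 < δ)
    (hρ : ∀ z, ∃ t : ℤ, ρ z = δ * t) (hS : ∀ z, (S z).card = n - k)
    (hov : OverlapProp k δ ρ S ε C0) (y : Fin n → ℝ) :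
    (Finset.univ.filter fun z => y ∈ cthickening δ (linFace δ ρ S ε z)).card ≤
      ⌈C0 ^ criticalExponent n k⌉₊ * 8 ^ n := by
  set T := Finset.univ.filter fun z => y ∈ cthickening δ (linFace δ ρ S ε z)
  set anchor : (Fin n → Fin m) → Finset (Fin n) × (Fin n → ℝ) :=
    fun z => (S z, faceAnchor (gridCenter δ z) (ρ z) (S z) (ε z))
  set cand : Fin n → Finset ℝ := fun j => insert 0
    ((Finset.Icc ⌈y j / δ - 3 / 2⌉ ⌊y j / δ - 3 / 2 + 2⌋).image fun s : ℤ => δ * (s + 1 / 2))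
  have hfiber : ∀ b ∈ T.image anchor,
      (T.filter fun z => anchor z = b).card ≤ ⌈C0 ^ criticalExponent n k⌉₊ := by
    intro b hb
    obtain ⟨z₀, -, rfl⟩ := Finset.mem_image.mp hb
    refine card_le_of_overlapProp hk hov (π := (S z₀)ᶜ) (v := (anchor z₀).2) ?_ fun z hz => ?_
    · rw [Finset.card_compl, Fintype.card_fin, hS z₀]
      omega
    · obtain ⟨hSz, hvz⟩ := Prod.ext_iff.mp (Finset.mem_filter.mp hz).2
      simp only [anchor] at hSz hvz ⊢
      rw [← hvz, ← hSz]
      exact kFace_subset_planeTranslate _ _ _ _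
  have himage : T.image anchor ⊆ Finset.univ ×ˢ Fintype.piFinset cand := by
    intro b hb
    obtain ⟨z, hz, rfl⟩ := Finset.mem_image.mp hb
    refine Finset.mem_product.mpr ⟨Finset.mem_univ _, Fintype.mem_piFinset.mpr fun j => ?_⟩
    by_cases hj : j ∈ S z
    · obtain ⟨t, ht⟩ := hρ z
      set s : ℤ := z j + if ε z j then t else -t
      have hval : gridCenter δ z j + (if ε z j then ρ z else -ρ z) = δ * (s + 1 / 2) := by
        simp only [s, gridCenter, ht]
        split_ifs <;> push_cast <;> ring
      have hy := abs_sub_le_of_mem_cthickening hδ.le (fun w hw => hw.1 j hj)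
        (Finset.mem_filter.mp hz).2
      rw [hval] at hy
      simp only [anchor, cand, faceAnchor, if_pos hj, hval]
      exact Finset.mem_insert_of_mem
        (Finset.mem_image_of_mem _ (mem_Icc_ceil_floor_of_abs_sub_le hδ hy))
    · simp [anchor, cand, faceAnchor, hj]
  have hcand (j : Fin n) : (cand j).card ≤ 4 :=
    (Finset.card_insert_le _ _).trans (Nat.succ_le_succ (Finset.card_image_le.trans
      (card_Icc_ceil_floor_add_two_le _)))
  calc T.card ≤ ⌈C0 ^ criticalExponent n k⌉₊ * (T.image anchor).card :=
        Finset.card_le_mul_card_image T _ hfiber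
    _ ≤ ⌈C0 ^ criticalExponent n k⌉₊ * (2 ^ n * 4 ^ n) := by
        gcongr
        calc (T.image anchor).card ≤ (Finset.univ ×ˢ Fintype.piFinset cand).card :=
              Finset.card_le_card himage
          _ ≤ 2 ^ n * 4 ^ n := by
              rw [Finset.card_product, Fintype.card_piFinset, Finset.card_univ,
                Fintype.card_finset, Fintype.card_fin]
              gcongr
              exact (Finset.prod_le_prod' fun j _ => hcand j).trans (by simp)
    _ = ⌈C0 ^ criticalExponent n k⌉₊ * 8 ^ n := by norm_num [← mul_pow]

end Multiplicity

section Averages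

variable {α ι : Type*} [MeasurableSpace α] {μ : Measure α}

lemma ofReal_mul_le_setLIntegral_of_lt_setAverage {f : α → ℝ} {s : Set α} {lam : ℝ}
    (hf : IntegrableOn f s μ) (h : lam < ⨍ y in s, |f y| ∂μ) :
    ENNReal.ofReal lam * μ s ≤ ∫⁻ y in s, ‖f y‖ₑ ∂μ := by
  refine ENNReal.mul_le_of_le_div ((ENNReal.ofReal_le_ofReal h.le).trans ?_)
  rw [ofReal_setAverage hf.abs (ae_of_all _ fun y => abs_nonneg (f y))]
  simp_rw [Real.enorm_eq_ofReal_abs]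
  rfl

open scoped Classical in
lemma sum_setLIntegral_le_mul_lintegral (s : Finset ι) {A : ι → Set α}
    (hA : ∀ i, MeasurableSet (A i)) {g : α → ℝ≥0∞} (hg : AEMeasurable g μ) {M : ℕ}
    (hM : ∀ y, (s.filter fun i => y ∈ A i).card ≤ M) :
    ∑ i ∈ s, ∫⁻ y in A i, g y ∂μ ≤ M * ∫⁻ y, g y ∂μ := by
  calc ∑ i ∈ s, ∫⁻ y in A i, g y ∂μ = ∫⁻ y, ∑ i ∈ s, (A i).indicator g y ∂μ := by
        rw [lintegral_finsetSum' s fun i _ => hg.indicator (hA i)]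
        simp_rw [lintegral_indicator (hA _)]
    _ = ∫⁻ y, (s.filter fun i => y ∈ A i).card * g y ∂μ := by
        simp_rw [indicator_apply, ← Finset.sum_filter, Finset.sum_const, nsmul_eq_mul]
    _ ≤ ∫⁻ y, M * g y ∂μ := lintegral_mono fun y => by gcongr; exact_mod_cast hM y
    _ = M * ∫⁻ y, g y ∂μ := lintegral_const_mul' _ _ (ENNReal.natCast_ne_top M)

open scoped Classical in
lemma card_mul_le_of_lt_setAverage (s : Finset ι) {A : ι → Set α}
    (hA : ∀ i, MeasurableSet (A i)) {f : α → ℝ} (hf : Integrable f μ) {P : ℝ≥0∞}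
    (hP : ∀ i ∈ s, P ≤ μ (A i)) {lam : ℝ} (hlam : ∀ i ∈ s, lam < ⨍ y in A i, |f y| ∂μ) {M : ℕ}
    (hM : ∀ y, (s.filter fun i => y ∈ A i).card ≤ M) :
    s.card * (ENNReal.ofReal lam * P) ≤ M * eLpNorm f 1 μ := by
  rw [eLpNorm_one_eq_lintegral_enorm]
  calc s.card * (ENNReal.ofReal lam * P) = ∑ i ∈ s, ENNReal.ofReal lam * P := by
        rw [Finset.sum_const, nsmul_eq_mul]
    _ ≤ ∑ i ∈ s, ∫⁻ y in A i, ‖f y‖ₑ ∂μ := Finset.sum_le_sum fun i hi =>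
        (mul_le_mul_right (hP i hi) _).trans
          (ofReal_mul_le_setLIntegral_of_lt_setAverage hf.integrableOn (hlam i hi))
    _ ≤ M * ∫⁻ y, ‖f y‖ₑ ∂μ :=
        sum_setLIntegral_le_mul_lintegral s hA hf.aemeasurable.enorm hM

end Averages

/-- Unless `V = 0`, `N ≥ 1` gives `L ≤ X P⁻¹`; interpolate it with `L V ≤ X c P⁻¹`
(weights `1 - θ` and `θ`). -/
lemma ENNReal.mul_rpow_le_of_card_mul_le {N : ℕ} {L V X c P : ℝ≥0∞} {θ : ℝ} (hθ₀ : 0 < θ)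
    (hθ₁ : θ ≤ 1) (hP₀ : P ≠ 0) (hP : P ≠ ∞) (hN : N * (L * P) ≤ X) (hV : V ≤ N * c) :
    L * V ^ θ ≤ X * c ^ θ * P⁻¹ := by
  rcases N.eq_zero_or_pos with rfl | hN₁
  · rw [Nat.cast_zero, zero_mul, nonpos_iff_eq_zero] at hV
    simp [hV, ENNReal.zero_rpow_of_pos hθ₀]
  have hLP : L * P ≤ X := le_trans (le_mul_of_one_le_left' (by exact_mod_cast hN₁)) hN
  have hL : L ≤ X * P⁻¹ := by
    rwa [← div_eq_mul_inv, ENNReal.le_div_iff_mul_le (Or.inl hP₀) (Or.inl hP)]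
  have hLV : L * V ≤ X * c * P⁻¹ :=
    calc L * V ≤ L * (N * c) := by gcongr
      _ = N * (L * (P * P⁻¹)) * c := by rw [ENNReal.mul_inv_cancel hP₀ hP]; ring
      _ = N * (L * P) * c * P⁻¹ := by ring
      _ ≤ X * c * P⁻¹ := by gcongr
  have hsplit (x : ℝ≥0∞) : x = x ^ θ * x ^ (1 - θ) := by
    rw [← ENNReal.rpow_add_of_nonneg _ _ hθ₀.le (sub_nonneg.mpr hθ₁), add_sub_cancel,
      ENNReal.rpow_one]
  calc L * V ^ θ = (L * V) ^ θ * L ^ (1 - θ) := by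
        rw [ENNReal.mul_rpow_of_nonneg _ _ hθ₀.le, mul_right_comm, ← hsplit]
    _ ≤ (X * c * P⁻¹) ^ θ * (X * P⁻¹) ^ (1 - θ) := by gcongr
    _ = X * c ^ θ * P⁻¹ := by
        simp only [ENNReal.mul_rpow_of_nonneg _ _ hθ₀.le,
          ENNReal.mul_rpow_of_nonneg _ _ (sub_nonneg.mpr hθ₁)]
        conv_rhs => rw [hsplit X, hsplit P⁻¹]
        ring

section Grid

variable {n m : ℕ}

def gridCell (δ : ℝ) (z : Fin n → Fin m) : Set (Fin n → ℝ) :=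
  univ.pi fun j => Ico (δ * (z j : ℕ)) (δ * ((z j : ℕ) + 1))

lemma volume_gridCell {δ : ℝ} (hδ : 0 ≤ δ) (z : Fin n → Fin m) :
    volume (gridCell δ z) = ENNReal.ofReal (δ ^ n) := by
  simp_rw [gridCell, volume_pi_pi, Real.volume_Ico, mul_add, mul_one, add_sub_cancel_left,
    Finset.prod_const, Finset.card_univ, Fintype.card_fin, ENNReal.ofReal_pow hδ]

lemma mem_gridCell_zOf (hm : 0 < m) {δ : ℝ} (hδ : 0 < δ) (hδm : δ * m = 1) {x : Fin n → ℝ}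
    (hx : x ∈ Q0 n) : x ∈ gridCell δ (zOf δ hm x) := by
  intro j _
  obtain ⟨hx₀, hx₁⟩ := hx j (mem_univ j)
  have hfloor₀ : 0 ≤ ⌊x j / δ⌋ := Int.floor_nonneg.mpr (div_nonneg hx₀ hδ.le)
  have hfloor₁ : ⌊x j / δ⌋ < m := Int.floor_lt.mpr (by
    rw [div_lt_iff₀ hδ]
    push_cast
    linarith)
  have hz : ((zOf δ hm x j : ℕ) : ℝ) = ⌊x j / δ⌋ := by
    simp only [zOf]
    rw [Nat.mod_eq_of_lt (by omega)]
    exact_mod_cast Int.toNat_of_nonneg hfloor₀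
  change x j ∈ Ico _ _
  rw [hz]
  constructor
  · rw [← le_div_iff₀' hδ]
    exact Int.floor_le _
  · rw [← div_lt_iff₀' hδ]
    exact Int.lt_floor_add_one _

open scoped Classical in
lemma volume_setOf_zOf_le (hm : 0 < m) {δ : ℝ} (hδ : 0 < δ) (hδm : δ * m = 1)
    (p : (Fin n → Fin m) → Prop) :
    volume {x ∈ Q0 n | p (zOf δ hm x)} ≤
      (Finset.univ.filter p).card * ENNReal.ofReal (δ ^ n) := by
  calc volume {x ∈ Q0 n | p (zOf δ hm x)}
      ≤ volume (⋃ z ∈ Finset.univ.filter p, gridCell δ z) := by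
        refine measure_mono fun x ⟨hx, hpx⟩ => mem_biUnion ?_ (mem_gridCell_zOf hm hδ hδm hx)
        exact Finset.mem_filter.mpr ⟨Finset.mem_univ _, hpx⟩
    _ ≤ ∑ z ∈ Finset.univ.filter p, volume (gridCell δ z) := measure_biUnion_finset_le _ _
    _ = _ := by simp_rw [volume_gridCell hδ.le, Finset.sum_const, nsmul_eq_mul]

end Grid

lemma rpow_one_div_mul_inv_le_of_le_criticalExponent {n k : ℕ} (hk : k < n) {q : ℝ}
    (hq : 0 < q) (hq' : q ≤ criticalExponent n k) {δ : ℝ} (hδ₀ : 0 < δ) (hδ₁ : δ ≤ 1) :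
    (δ ^ n) ^ (1 / q) * (2 ^ n * δ ^ (n - k))⁻¹ ≤ δ ^ (((k : ℝ) - n) / (2 * n)) := by
  have hkn : (k : ℝ) + 1 ≤ n := by exact_mod_cast hk
  have hexp : ((k : ℝ) - n) / (2 * n) ≤ n / q - (n - k) := by
    have hq'' : q * (((n : ℝ) - k) * (2 * n - 1)) ≤ 2 * n ^ 2 :=
      (le_div_iff₀ (by nlinarith)).mp hq'
    rw [div_le_iff₀ (by linarith), sub_mul, div_mul_eq_mul_div, le_sub_iff_add_le,
      le_div_iff₀ hq]
    nlinarith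
  calc (δ ^ n) ^ (1 / q) * (2 ^ n * δ ^ (n - k))⁻¹ ≤ (δ ^ n) ^ (1 / q) * (δ ^ (n - k))⁻¹ := by
        gcongr
        exact le_mul_of_one_le_left (by positivity) (one_le_pow₀ one_le_two)
    _ = δ ^ ((n : ℝ) / q - (n - k)) := by
        rw [Real.rpow_sub hδ₀, div_eq_mul_inv _ (δ ^ ((n : ℝ) - k)), ← Real.rpow_natCast,
          ← Real.rpow_mul hδ₀.le, ← Real.rpow_natCast, Nat.cast_sub hk.le, mul_one_div]
    _ ≤ δ ^ (((k : ℝ) - n) / (2 * n)) := Real.rpow_le_rpow_of_exponent_ge hδ₀ hδ₁ hexp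

theorem linMax_weak_type_low_general (n k : ℕ) (hk : k < n)
    (q : ℝ) (hq1 : 1 < q)
    (hq2 : q ≤ 2 * (n : ℝ) ^ 2 / (((n : ℝ) - k) * (2 * (n : ℝ) - 1)))
    (C0 : ℝ) (hC0 : 0 < C0) :
    ∃ C > 0, ∀ δ ∈ Set.Ioo (0 : ℝ) 1, ∀ (m : ℕ) (hm : 0 < m), δ * m = 1 →
      ∀ (ρ : (Fin n → Fin m) → ℝ),
        (∀ z, ρ z ∈ Set.Icc (1 : ℝ) 2 ∧ ∃ t : ℤ, ρ z = δ * t) →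
      ∀ (S : (Fin n → Fin m) → Finset (Fin n)), (∀ z, (S z).card = n - k) →
      ∀ (ε : (Fin n → Fin m) → Fin n → Bool), OverlapProp k δ ρ S ε C0 →
      ∀ f : (Fin n → ℝ) → ℝ, Integrable f volume → Function.support f ⊆ sevenQ0 n →
      ∀ lam : ℝ, 0 < lam →
        ENNReal.ofReal lam *
            volume {x ∈ Q0 n | lam < linMax δ hm ρ S ε f x} ^ (1 / q) ≤
          ENNReal.ofReal (C * δ ^ (((k : ℝ) - n) / (2 * n))) * eLpNorm f 1 volume := by
  classical
  set M := ⌈C0 ^ criticalExponent n k⌉₊ * 8 ^ n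
  have hM : 0 < M := Nat.mul_pos (Nat.ceil_pos.mpr (Real.rpow_pos_of_pos hC0 _)) (by positivity)
  refine ⟨M, by exact_mod_cast hM, ?_⟩
  rintro δ ⟨hδ₀, hδ₁⟩ m hm hδm ρ hρ S hS ε hov f hf - lam -
  set A := fun z => cthickening δ (linFace δ ρ S ε z)
  set P := ENNReal.ofReal (2 ^ n * δ ^ (n - k))
  set bad := Finset.univ.filter fun z => lam < ⨍ y in A z, |f y|
  have hcount : bad.card * (ENNReal.ofReal lam * P) ≤ M * eLpNorm f 1 volume := by
    refine card_mul_le_of_lt_setAverage bad (fun z => isClosed_cthickening.measurableSet) hf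
      (fun z _ => ?_) (fun z hz => (Finset.mem_filter.mp hz).2) fun y => ?_
    · have hvol := ofReal_le_volume_cthickening_kFace (x := gridCenter δ z) hδ₀.le (hρ z).1.1
        (S z) (ε z)
      rwa [hS z] at hvol
    · exact (Finset.card_le_card (Finset.filter_subset_filter _ (Finset.subset_univ bad))).trans
        (card_filter_mem_cthickening_linFace_le hk hδ₀ (fun z => (hρ z).2) hS hov y)
  have hcover := volume_setOf_zOf_le hm hδ₀ hδm fun z => lam < ⨍ y in A z, |f y|
  calc ENNReal.ofReal lam * volume {x ∈ Q0 n | lam < linMax δ hm ρ S ε f x} ^ (1 / q)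
      ≤ M * eLpNorm f 1 volume * ENNReal.ofReal (δ ^ n) ^ (1 / q) * P⁻¹ :=
        ENNReal.mul_rpow_le_of_card_mul_le (by positivity)
          (div_le_one_of_le₀ hq1.le (by positivity)) (ENNReal.ofReal_pos.mpr (by positivity)).ne'
          ENNReal.ofReal_ne_top hcount hcover
    _ = ENNReal.ofReal (M * ((δ ^ n) ^ (1 / q) * (2 ^ n * δ ^ (n - k))⁻¹)) *
          eLpNorm f 1 volume := by
        rw [ENNReal.ofReal_rpow_of_nonneg (by positivity) (by positivity),
          ← ENNReal.ofReal_inv_of_pos (by positivity), ENNReal.ofReal_mul (by positivity),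
          ENNReal.ofReal_mul (by positivity), ENNReal.ofReal_natCast]
        ring
    _ ≤ _ := by
        gcongr
        exact rpow_one_div_mul_inv_le_of_le_criticalExponent hk (by linarith) hq2 hδ₀ hδ₁.le

/-- weak-type `(1,q)` bound for the linearized operator, `1 < q ≤ q*`.
If the face selection has the overlap property with constant `C₀ = C₀(n,k)`, then there is
`C = C(k,n,q) > 0` such that for every `f ∈ L¹` supported in `7Q₀` and every `λ > 0`,
`λ |{x ∈ Q₀ : M̃^k_{ρ,δ} f (x) > λ}|^{1/q} ≤ C δ^{(k-n)/(2n)} ‖f‖_{L¹}`. -/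
theorem linMax_weak_type_low (n k : ℕ) (hn : 2 ≤ n) (hk : k < n)
    (q : ℝ) (hq1 : 1 < q)
    (hq2 : q ≤ 2 * (n : ℝ) ^ 2 / (((n : ℝ) - k) * (2 * (n : ℝ) - 1)))
    (C0 : ℝ) (hC0 : 0 < C0) :
    ∃ C > 0, ∀ δ ∈ Set.Ioo (0 : ℝ) 1, ∀ (m : ℕ) (hm : 0 < m), δ * m = 1 →
      ∀ (ρ : (Fin n → Fin m) → ℝ),
        (∀ z, ρ z ∈ Set.Icc (1 : ℝ) 2 ∧ ∃ t : ℤ, ρ z = δ * t) →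
      ∀ (S : (Fin n → Fin m) → Finset (Fin n)), (∀ z, (S z).card = n - k) →
      ∀ (ε : (Fin n → Fin m) → Fin n → Bool), OverlapProp k δ ρ S ε C0 →
      ∀ f : (Fin n → ℝ) → ℝ, Integrable f volume → Function.support f ⊆ sevenQ0 n →
      ∀ lam : ℝ, 0 < lam →
        ENNReal.ofReal lam *
            volume {x ∈ Q0 n | lam < linMax δ hm ρ S ε f x} ^ (1 / q) ≤
          ENNReal.ofReal (C * δ ^ (((k : ℝ) - n) / (2 * n))) * eLpNorm f 1 volume :=
  linMax_weak_type_low_general n k hk q hq1 hq2 C0 hC0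
end
end
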